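/- arXiv:2003.13067 — 9 statements merged into one kernel-verified Lean document; each statement's English description precedes it below -/
import Mathlib

section
/- For every state s ≤ θ_N and every non-merging action a with a < s, one has H(a) ≤ G(s); consequently the one-stage optimal value V_N(s) := max( G(s), sup_{a < s} H(a) ) equals G(s), i.e., for the last vehicle the merging action a = s is optimal whenever the predicted headway satisfies s ≤ θ_N. -/
open MeasureTheory Set Filter

/-- Below `c` the bound comes from monotonicity alone; above `c` it comes from `G a ≤ G c`, the
maximum of `G` left of `t`, and from `G s ≥ G θ = G c - k`. -/
lemma sub_le_of_lt_of_le_crossing {α β : Type*} [LinearOrder α] [AddCommGroup β] [LinearOrder β]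
    [IsOrderedAddMonoid β] {G : α → β} {c t θ s a : α} {k : β}
    (hinc : MonotoneOn G (Iic c)) (hdec : AntitoneOn G (Ico c t)) (hk : 0 ≤ k)
    (hθ : θ < t) (hGθ : G θ = G c - k) (hs : s ≤ θ) (ha : a < s) :
    G a - k ≤ G s := by
  rcases le_or_gt s c with hsc | hcs
  · calc G a - k ≤ G a := sub_le_self _ hk
      _ ≤ G s := hinc (ha.le.trans hsc) hsc ha.le
  · have hst : s < t := hs.trans_lt hθ
    calc G a - k ≤ G c - k :=
          sub_le_sub_right (isMaxOn_Iio_of_mono_anti hinc hdec (ha.trans hst)) k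
      _ = G θ := hGθ.symm
      _ ≤ G s := hdec ⟨hcs.le, hst⟩ ⟨hcs.le.trans hs, hθ⟩ hs

theorem stmt_2_general
    (cN t₀ : ℝ) (G : ℝ → ℝ)
    (hGinc : StrictMonoOn G (Iic cN))
    (hGdec : StrictAntiOn G (Ico cN t₀))
    (hG0 : 0 < G 0)
    (θN : ℝ) (hθN : θN ∈ Ioo cN t₀) (hGθN : G θN = G cN - G 0)
    (s : ℝ) (hs : s ≤ θN) :
    (∀ a < s, G a - G 0 ≤ G s) ∧
    max (G s) (sSup ((fun a => G a - G 0) '' Iio s)) = G s := by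
  have hbound : ∀ a < s, G a - G 0 ≤ G s := fun a ha =>
    sub_le_of_lt_of_le_crossing hGinc.monotoneOn hGdec.antitoneOn hG0.le hθN.2 hGθN hs ha
  refine ⟨hbound, max_eq_left (csSup_le (nonempty_Iio.image _) ?_)⟩
  rintro _ ⟨a, ha, rfl⟩
  exact hbound a ha

theorem stmt_2
    (cN t₀ : ℝ) (G : ℝ → ℝ)
    (hcN : cN < 0) (ht₀ : 0 < t₀)
    (hGcont : ContinuousOn G (Iio t₀))
    (hGinc : StrictMonoOn G (Iic cN))
    (hGdec : StrictAntiOn G (Ico cN t₀))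
    (hGtop : Tendsto G (nhdsWithin t₀ (Iio t₀)) atBot)
    (hGbot : Tendsto G atBot atBot)
    (hG0 : 0 < G 0)
    (θN : ℝ) (hθN : θN ∈ Ioo cN t₀) (hGθN : G θN = G cN - G 0)
    (s : ℝ) (hs : s ≤ θN) :
    (∀ a < s, G a - G 0 ≤ G s) ∧
    max (G s) (sSup ((fun a => G a - G 0) '' Iio s)) = G s :=
  stmt_2_general cN t₀ G hGinc hGdec hG0 θN hθN hGθN s hs
end

section
/- For every state s > θ_N: the supremum of H over the non-merging actions, sup_{a < min(s, t₀)} H(a), equals Z_N and is attained at the admissible action a = c_N; moreover if s < t₀ then G(s) < Z_N. Consequently V_N(s) = Z_N and the non-merging action a = c_N is optimal for the last vehicle whenever s > θ_N. -/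
/-! Since `G` increases up to `c_N` and decreases afterwards, `c_N` maximises `G` (hence `H`) on
`(-∞, t₀)`, so every supremum of `H` over an interval `(-∞, u)` with `c_N < u ≤ t₀` is attained at
`c_N`. For `θ_N < s < t₀`, strict decrease on `[c_N, t₀)` gives `G s < G θ_N = Z_N`, so the stopping
payoff `G s` never beats the non-merging value. -/

open MeasureTheory Set Filter

theorem le_of_monotoneOn_Iic_of_antitoneOn_Ico {α β : Type*} [LinearOrder α] [Preorder β]
    {f : α → β} {c t : α} (hmono : MonotoneOn f (Iic c)) (hanti : AntitoneOn f (Ico c t))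
    {a : α} (ha : a < t) : f a ≤ f c := by
  rcases le_or_gt a c with hac | hca
  · exact hmono hac le_rfl hac
  · exact hanti ⟨le_rfl, hca.trans ha⟩ ⟨hca.le, ha⟩ hca.le

theorem csSup_image_Iio_eq_of_le {α β : Type*} [Preorder α] [ConditionallyCompleteLattice β]
    {f : α → β} {c u : α} (hcu : c < u) (hle : ∀ a < u, f a ≤ f c) :
    sSup (f '' Iio u) = f c :=
  IsGreatest.csSup_eq ⟨mem_image_of_mem f hcu, by rintro _ ⟨a, ha, rfl⟩; exact hle a ha⟩

theorem stmt_3_general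
    (cN t₀ : ℝ) (G : ℝ → ℝ)
    (hGinc : StrictMonoOn G (Iic cN))
    (hGdec : StrictAntiOn G (Ico cN t₀))
    (θN : ℝ) (hθN : θN ∈ Ioo cN t₀) (hGθN : G θN = G cN - G 0)
    (V_N : ℝ → ℝ)
    (hVN : ∀ s, V_N s = if s < t₀
      then max (G s) (sSup ((fun a => G a - G 0) '' {a | a < s ∧ a < t₀}))
      else sSup ((fun a => G a - G 0) '' Iio t₀))
    (s : ℝ) (hs : θN < s) :
    sSup ((fun a => G a - G 0) '' Iio (min s t₀)) = G cN - G 0 ∧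
    cN < min s t₀ ∧
    (s < t₀ → G s < G cN - G 0) ∧
    V_N s = G cN - G 0 := by
  obtain ⟨hcNθ, hθt⟩ := hθN
  have hcNt : cN < t₀ := hcNθ.trans hθt
  have hcNmin : cN < min s t₀ := lt_min (hcNθ.trans hs) hcNt
  have hsup : ∀ u, cN < u → u ≤ t₀ → sSup ((fun a => G a - G 0) '' Iio u) = G cN - G 0 :=
    fun u hu hut => csSup_image_Iio_eq_of_le hu fun a ha => sub_le_sub_right
      (le_of_monotoneOn_Iic_of_antitoneOn_Ico hGinc.monotoneOn hGdec.antitoneOn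
        (ha.trans_le hut)) _
  have hsupmin := hsup _ hcNmin (min_le_right _ _)
  have hstop : s < t₀ → G s < G cN - G 0 := fun hst =>
    hGθN ▸ hGdec ⟨hcNθ.le, hθt⟩ ⟨(hcNθ.trans hs).le, hst⟩ hs
  refine ⟨hsupmin, hcNmin, hstop, ?_⟩
  rw [hVN s]
  split_ifs with hst
  · rw [show {a | a < s ∧ a < t₀} = Iio (min s t₀) by ext; simp, hsupmin,
      max_eq_right (hstop hst).le]
  · exact hsup _ hcNt le_rfl

theorem stmt_3
    (cN t₀ : ℝ) (G : ℝ → ℝ)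
    (hcN : cN < 0) (ht₀ : 0 < t₀)
    (hGcont : ContinuousOn G (Iio t₀))
    (hGinc : StrictMonoOn G (Iic cN))
    (hGdec : StrictAntiOn G (Ico cN t₀))
    (hGtop : Tendsto G (nhdsWithin t₀ (Iio t₀)) atBot)
    (hGbot : Tendsto G atBot atBot)
    (hG0 : 0 < G 0)
    (θN : ℝ) (hθN : θN ∈ Ioo cN t₀) (hGθN : G θN = G cN - G 0)
    (V_N : ℝ → ℝ)
    (hVN : ∀ s, V_N s = if s < t₀
      then max (G s) (sSup ((fun a => G a - G 0) '' {a | a < s ∧ a < t₀}))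
      else sSup ((fun a => G a - G 0) '' Iio t₀))
    (s : ℝ) (hs : θN < s) :
    sSup ((fun a => G a - G 0) '' Iio (min s t₀)) = G cN - G 0 ∧
    cN < min s t₀ ∧
    (s < t₀ → G s < G cN - G 0) ∧
    V_N s = G cN - G 0 :=
  stmt_3_general cN t₀ G hGinc hGdec θN hθN hGθN V_N hVN s hs
end

section
/- The one-stage optimal value function satisfies V_N(s) = G(s) for all s ≤ θ_N and V_N(s) = Z_N for all s > θ_N. In particular: V_N is antitone (monotonically decreasing) on [c_N, ∞); V_N attains its global maximum Z_N + G(0) exactly at s = c_N; V_N(y) = Z_N for y ≥ θ_N and V_N(y) > Z_N for c_N ≤ y < θ_N; and the optimal one-stage policy is threshold-based: merge (a = s) if s ≤ θ_N, otherwise take the non-merging action a = c_N. -/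
open MeasureTheory Set Filter

/-!
`G` is unimodal on `(-∞, t₀)` with peak at `c_N`. For `c_N < s` the non-merging supremum
`sup_{a < s} H(a)` is attained at `a = c_N` and equals `Z_N`, so `V_N(s) = max (G s) Z_N`; as `G`
decreases on `[c_N, t₀)` through the value `Z_N` at `θ_N`, this is `G s` up to `θ_N` and `Z_N`
beyond. For `s ≤ c_N` the supremum stays below `G s - G 0 < G s` because `G` increases there.
All remaining claims are read off this two-piece formula.
-/

section Unimodal

variable {G : ℝ → ℝ} {c t : ℝ}

theorem lt_apply_of_strictMonoOn_of_strictAntiOn (hinc : StrictMonoOn G (Iic c))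
    (hdec : StrictAntiOn G (Ico c t)) {a : ℝ} (ha : a < t) (hac : a ≠ c) : G a < G c := by
  rcases hac.lt_or_gt with h | h
  · exact hinc h.le (le_refl c) h
  · exact hdec ⟨le_rfl, h.trans ha⟩ ⟨h.le, ha⟩ h

theorem le_apply_of_strictMonoOn_of_strictAntiOn (hinc : StrictMonoOn G (Iic c))
    (hdec : StrictAntiOn G (Ico c t)) {a : ℝ} (ha : a < t) : G a ≤ G c := by
  rcases eq_or_ne a c with rfl | hac
  · exact le_rfl
  · exact (lt_apply_of_strictMonoOn_of_strictAntiOn hinc hdec ha hac).le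

theorem isGreatest_image_sub_of_strictMonoOn_of_strictAntiOn (hinc : StrictMonoOn G (Iic c))
    (hdec : StrictAntiOn G (Ico c t)) {S : Set ℝ} (hS : S ⊆ Iio t) (hc : c ∈ S) (K : ℝ) :
    IsGreatest ((fun a => G a - K) '' S) (G c - K) :=
  ⟨mem_image_of_mem _ hc, forall_mem_image.2 fun _ ha =>
    sub_le_sub_right (le_apply_of_strictMonoOn_of_strictAntiOn hinc hdec (hS ha)) K⟩

theorem csSup_image_sub_le_of_strictMonoOn (hinc : StrictMonoOn G (Iic c)) {s : ℝ} (hs : s ≤ c)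
    {S : Set ℝ} (hS : S ⊆ Iio s) (hne : S.Nonempty) (K : ℝ) :
    sSup ((fun a => G a - K) '' S) ≤ G s - K :=
  csSup_le (hne.image _) (forall_mem_image.2 fun _ ha =>
    sub_le_sub_right (hinc ((hS ha).le.trans hs) hs (hS ha)).le K)

variable {θ K s : ℝ}

theorem max_csSup_eq_left_of_le_threshold (hinc : StrictMonoOn G (Iic c))
    (hdec : StrictAntiOn G (Ico c t)) (hθ : θ ∈ Ioo c t) (hGθ : G θ = G c - K) (hK : 0 ≤ K)
    (hs : s ≤ θ) :
    max (G s) (sSup ((fun a => G a - K) '' {a | a < s ∧ a < t})) = G s := by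
  refine max_eq_left ?_
  rcases le_or_gt s c with hsc | hcs
  · calc _ ≤ G s - K := csSup_image_sub_le_of_strictMonoOn hinc hsc (S := {a | a < s ∧ a < t})
          (fun _ ha => ha.1) ⟨s - 1, by linarith, by linarith [hθ.2]⟩ K
      _ ≤ G s := by linarith
  · rw [(isGreatest_image_sub_of_strictMonoOn_of_strictAntiOn hinc hdec
      (S := {a | a < s ∧ a < t}) (fun _ ha => ha.2) ⟨hcs, hθ.1.trans hθ.2⟩ K).csSup_eq,
      ← hGθ]
    exact hdec.antitoneOn ⟨hcs.le, hs.trans_lt hθ.2⟩ ⟨hθ.1.le, hθ.2⟩ hs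

theorem max_csSup_eq_of_threshold_lt (hinc : StrictMonoOn G (Iic c))
    (hdec : StrictAntiOn G (Ico c t)) (hθ : θ ∈ Ioo c t) (hGθ : G θ = G c - K)
    (hθs : θ < s) (hst : s < t) :
    max (G s) (sSup ((fun a => G a - K) '' {a | a < s ∧ a < t})) = G c - K := by
  rw [(isGreatest_image_sub_of_strictMonoOn_of_strictAntiOn hinc hdec
    (S := {a | a < s ∧ a < t}) (fun _ ha => ha.2) ⟨hθ.1.trans hθs, hθ.1.trans hθ.2⟩ K).csSup_eq,
    max_eq_right]
  rw [← hGθ]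
  exact (hdec ⟨hθ.1.le, hθ.2⟩ ⟨(hθ.1.trans hθs).le, hst⟩ hθs).le

end Unimodal

theorem antitoneOn_Ici_of_eq_of_eq_const {V G : ℝ → ℝ} {c θ : ℝ}
    (hG : AntitoneOn G (Icc c θ)) (hle : ∀ s, s ≤ θ → V s = G s)
    (hgt : ∀ s, θ < s → V s = G θ) :
    AntitoneOn V (Ici c) := by
  intro x hx y hy hxy
  rcases le_or_gt y θ with hyθ | hθy
  · rw [hle x (hxy.trans hyθ), hle y hyθ]
    exact hG ⟨hx, hxy.trans hyθ⟩ ⟨hy, hyθ⟩ hxy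
  · rw [hgt y hθy]
    rcases le_or_gt x θ with hxθ | hθx
    · rw [hle x hxθ]
      exact hG ⟨hx, hxθ⟩ ⟨hx.trans hxθ, le_rfl⟩ hxθ
    · rw [hgt x hθx]

theorem stmt_4_general
    (cN t₀ : ℝ) (G : ℝ → ℝ)
    (hGinc : StrictMonoOn G (Iic cN))
    (hGdec : StrictAntiOn G (Ico cN t₀))
    (hG0 : 0 < G 0)
    (θN : ℝ) (hθN : θN ∈ Ioo cN t₀) (hGθN : G θN = G cN - G 0)
    (V_N : ℝ → ℝ)
    (hVN : ∀ s, V_N s = if s < t₀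
      then max (G s) (sSup ((fun a => G a - G 0) '' {a | a < s ∧ a < t₀}))
      else sSup ((fun a => G a - G 0) '' Iio t₀)) :
    (∀ s, s ≤ θN → V_N s = G s) ∧
    (∀ s, θN < s → V_N s = G cN - G 0) ∧
    AntitoneOn V_N (Ici cN) ∧
    (∀ s, V_N s ≤ (G cN - G 0) + G 0) ∧
    (∀ s, V_N s = (G cN - G 0) + G 0 ↔ s = cN) ∧
    (∀ y, θN ≤ y → V_N y = G cN - G 0) ∧
    (∀ y, cN ≤ y → y < θN → G cN - G 0 < V_N y) := by
  have hVle : ∀ s, s ≤ θN → V_N s = G s := fun s hs => by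
    rw [hVN, if_pos (hs.trans_lt hθN.2),
      max_csSup_eq_left_of_le_threshold hGinc hGdec hθN hGθN hG0.le hs]
  have hVgt : ∀ s, θN < s → V_N s = G cN - G 0 := fun s hs => by
    rw [hVN]
    split_ifs with hst
    · exact max_csSup_eq_of_threshold_lt hGinc hGdec hθN hGθN hs hst
    · exact (isGreatest_image_sub_of_strictMonoOn_of_strictAntiOn hGinc hGdec subset_rfl
        (hθN.1.trans hθN.2) (G 0)).csSup_eq
  have hV_lt : ∀ s, s ≠ cN → V_N s < G cN := fun s hs => by
    rcases le_or_gt s θN with h | h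
    · rw [hVle s h]
      exact lt_apply_of_strictMonoOn_of_strictAntiOn hGinc hGdec (h.trans_lt hθN.2) hs
    · rw [hVgt s h]
      linarith
  have hVc : V_N cN = G cN := hVle cN hθN.1.le
  rw [sub_add_cancel]
  refine ⟨hVle, hVgt, ?_, fun s => ?_, fun s => ⟨fun h => ?_, fun h => h ▸ hVc⟩,
    fun y hy => ?_, fun y hcy hyθ => ?_⟩
  · exact antitoneOn_Ici_of_eq_of_eq_const (hGdec.antitoneOn.mono (Icc_subset_Ico_right hθN.2))
      hVle fun s hs => (hVgt s hs).trans hGθN.symm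
  · rcases eq_or_ne s cN with rfl | hs
    exacts [hVc.le, (hV_lt s hs).le]
  · by_contra hs
    exact (hV_lt s hs).ne h
  · rcases hy.eq_or_lt with rfl | h
    exacts [(hVle _ le_rfl).trans hGθN, hVgt y h]
  · rw [hVle y hyθ.le, ← hGθN]
    exact hGdec ⟨hcy, hyθ.trans hθN.2⟩ ⟨hθN.1.le, hθN.2⟩ hyθ

theorem stmt_4
    (cN t₀ : ℝ) (G : ℝ → ℝ)
    (hcN : cN < 0) (ht₀ : 0 < t₀)
    (hGcont : ContinuousOn G (Iio t₀))
    (hGinc : StrictMonoOn G (Iic cN))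
    (hGdec : StrictAntiOn G (Ico cN t₀))
    (hGtop : Tendsto G (nhdsWithin t₀ (Iio t₀)) atBot)
    (hGbot : Tendsto G atBot atBot)
    (hG0 : 0 < G 0)
    (θN : ℝ) (hθN : θN ∈ Ioo cN t₀) (hGθN : G θN = G cN - G 0)
    (V_N : ℝ → ℝ)
    (hVN : ∀ s, V_N s = if s < t₀
      then max (G s) (sSup ((fun a => G a - G 0) '' {a | a < s ∧ a < t₀}))
      else sSup ((fun a => G a - G 0) '' Iio t₀)) :
    (∀ s, s ≤ θN → V_N s = G s) ∧
    (∀ s, θN < s → V_N s = G cN - G 0) ∧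
    AntitoneOn V_N (Ici cN) ∧
    (∀ s, V_N s ≤ (G cN - G 0) + G 0) ∧
    (∀ s, V_N s = (G cN - G 0) + G 0 ↔ s = cN) ∧
    (∀ y, θN ≤ y → V_N y = G cN - G 0) ∧
    (∀ y, cN ≤ y → y < θN → G cN - G 0 < V_N y) :=
  stmt_4_general cN t₀ G hGinc hGdec hG0 θN hθN hGθN V_N hVN
end

section
/- Let Z ∈ ℝ and let V : ℝ → ℝ be measurable, bounded below on [r, ∞) for every real r, with V(y) ≤ Z + G(0) for all y ∈ ℝ and V(y) ≥ Z for all y ≥ c_N. Then J(s) := G(s) + γ ∫₀^∞ f(x) V(s + x) dx satisfies J(s) < J(c_N) for every s ≤ θ'_N. -/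
/-!
Monotonicity of `G` on `(-∞, c_N]` gives `G s ≤ G θ'_N = G c_N - G 0` for `s ≤ θ'_N`, and averaging
the bounds on `V` against the density `f` gives `J s ≤ G c_N - G 0 + γ (Z + G 0)` and
`J c_N ≥ G c_N + γ Z`. The gap is at least `(1 - γ) G 0 > 0`.
-/

open MeasureTheory Set Filter

section WeightedAverage

variable {α : Type*} [MeasurableSpace α] {μ : Measure α} {w g : α → ℝ} {B : ℝ}

theorem integral_mul_le_of_integral_eq_one (hw : 0 ≤ᵐ[μ] w) (hw1 : ∫ x, w x ∂μ = 1)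
    (hwg : Integrable (fun x => w x * g x) μ) (hgB : ∀ᵐ x ∂μ, g x ≤ B) :
    ∫ x, w x * g x ∂μ ≤ B :=
  calc ∫ x, w x * g x ∂μ ≤ ∫ x, w x * B ∂μ :=
        integral_mono_ae hwg ((integrable_of_integral_eq_one hw1).mul_const B) <| by
          filter_upwards [hw, hgB] with x hwx hgx
          exact mul_le_mul_of_nonneg_left hgx hwx
    _ = B := by rw [integral_mul_const, hw1, one_mul]

theorem le_integral_mul_of_integral_eq_one (hw : 0 ≤ᵐ[μ] w) (hw1 : ∫ x, w x ∂μ = 1)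
    (hwg : Integrable (fun x => w x * g x) μ) (hBg : ∀ᵐ x ∂μ, B ≤ g x) :
    B ≤ ∫ x, w x * g x ∂μ :=
  calc B = ∫ x, w x * B ∂μ := by rw [integral_mul_const, hw1, one_mul]
    _ ≤ ∫ x, w x * g x ∂μ :=
        integral_mono_ae ((integrable_of_integral_eq_one hw1).mul_const B) hwg <| by
          filter_upwards [hw, hBg] with x hwx hgx
          exact mul_le_mul_of_nonneg_left hgx hwx

theorem IntegrableOn.mul_of_isBounded_image {f : α → ℝ} {s : Set α} (hs : MeasurableSet s)
    (hf : IntegrableOn f s μ) (hg : AEStronglyMeasurable g (μ.restrict s))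
    (hgs : Bornology.IsBounded (g '' s)) : IntegrableOn (fun x => f x * g x) s μ := by
  obtain ⟨C, hC⟩ := hgs.exists_norm_le
  exact hf.mul_bdd hg <|
    (ae_restrict_iff' hs).2 (Eventually.of_forall fun x hx => hC _ (mem_image_of_mem g hx))

end WeightedAverage

theorem integrableOn_Ioi_mul_comp_const_add {f V : ℝ → ℝ} (t : ℝ) (hf : IntegrableOn f (Ioi 0))
    (hV : Measurable V) (hVt : Bornology.IsBounded (V '' Ici t)) :
    IntegrableOn (fun x => f x * V (t + x)) (Ioi 0) := by
  refine IntegrableOn.mul_of_isBounded_image measurableSet_Ioi hf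
    (hV.comp (measurable_const_add t)).aestronglyMeasurable (hVt.subset ?_)
  rintro _ ⟨x, hx, rfl⟩
  exact mem_image_of_mem V (mem_Ici.2 (le_add_of_nonneg_right (le_of_lt hx)))

theorem stmt_6_general
    (cN : ℝ) (G : ℝ → ℝ)
    (hGinc : StrictMonoOn G (Iic cN))
    (hG0 : 0 < G 0)
    (θN' : ℝ) (hθN' : θN' < cN) (hGθN' : G θN' = G cN - G 0)
    (f : ℝ → ℝ) (γ : ℝ)
    (hfnn : ∀ x, 0 ≤ f x)
    (hf1 : (∫ x in Ioi (0:ℝ), f x) = 1) (hγ : γ ∈ Ioo (0:ℝ) 1)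
    (Z : ℝ) (V : ℝ → ℝ) (hVm : Measurable V)
    (hVlb : ∀ r : ℝ, BddBelow (V '' Ici r))
    (hVub : ∀ y, V y ≤ Z + G 0)
    (hVge : ∀ y, cN ≤ y → Z ≤ V y)
    (J : ℝ → ℝ) (hJ : ∀ s, J s = G s + γ * ∫ x in Ioi (0:ℝ), f x * V (s + x)) :
    ∀ s, s ≤ θN' → J s < J cN := by
  intro s hs
  obtain ⟨hγ0, hγ1⟩ := hγ
  have hf_nonneg : 0 ≤ᵐ[volume.restrict (Ioi (0:ℝ))] f := Eventually.of_forall hfnn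
  have hV_bdd (t : ℝ) : Bornology.IsBounded (V '' Ici t) :=
    isBounded_iff_bddBelow_bddAbove.2
      ⟨hVlb t, ⟨Z + G 0, forall_mem_image.2 fun y _ => hVub y⟩⟩
  have hint (t : ℝ) : IntegrableOn (fun x => f x * V (t + x)) (Ioi 0) :=
    integrableOn_Ioi_mul_comp_const_add t (integrable_of_integral_eq_one hf1) hVm (hV_bdd t)
  have hE_s : ∫ x in Ioi (0:ℝ), f x * V (s + x) ≤ Z + G 0 :=
    integral_mul_le_of_integral_eq_one hf_nonneg hf1 (hint s)
      (Eventually.of_forall fun x => hVub _)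
  have hE_cN : Z ≤ ∫ x in Ioi (0:ℝ), f x * V (cN + x) :=
    le_integral_mul_of_integral_eq_one hf_nonneg hf1 (hint cN) <|
      (ae_restrict_iff' measurableSet_Ioi).2 <| Eventually.of_forall fun x hx =>
        hVge _ (le_add_of_nonneg_right (le_of_lt hx))
  have hG_s : G s ≤ G θN' := hGinc.monotoneOn (hs.trans hθN'.le) hθN'.le hs
  rw [hJ s, hJ cN]
  linarith [mul_le_mul_of_nonneg_left hE_s hγ0.le, mul_le_mul_of_nonneg_left hE_cN hγ0.le,
    mul_pos (sub_pos.2 hγ1) hG0]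

theorem stmt_6
    (cN t₀ : ℝ) (G : ℝ → ℝ)
    (hcN : cN < 0) (ht₀ : 0 < t₀)
    (hGcont : ContinuousOn G (Iio t₀))
    (hGinc : StrictMonoOn G (Iic cN))
    (hGdec : StrictAntiOn G (Ico cN t₀))
    (hGtop : Tendsto G (nhdsWithin t₀ (Iio t₀)) atBot)
    (hGbot : Tendsto G atBot atBot)
    (hG0 : 0 < G 0)
    (θN' : ℝ) (hθN' : θN' < cN) (hGθN' : G θN' = G cN - G 0)
    (f : ℝ → ℝ) (γ : ℝ)
    (hfm : Measurable f) (hf0 : ∀ x ≤ 0, f x = 0) (hfnn : ∀ x, 0 ≤ f x)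
    (hf1 : (∫ x in Ioi (0:ℝ), f x) = 1) (hγ : γ ∈ Ioo (0:ℝ) 1)
    (Z : ℝ) (V : ℝ → ℝ) (hVm : Measurable V)
    (hVlb : ∀ r : ℝ, BddBelow (V '' Ici r))
    (hVub : ∀ y, V y ≤ Z + G 0)
    (hVge : ∀ y, cN ≤ y → Z ≤ V y)
    (J : ℝ → ℝ) (hJ : ∀ s, J s = G s + γ * ∫ x in Ioi (0:ℝ), f x * V (s + x)) :
    ∀ s, s ≤ θN' → J s < J cN :=
  stmt_6_general cN G hGinc hG0 θN' hθN' hGθN' f γ hfnn hf1 hγ Z V hVm hVlb hVub hVge J hJ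
end

section
/- Set Z'' := (max_{s ≤ c_N} J(s)) − G(0), the maximum being attained. Then Z'' > J(θ_N). -/
/-!
On `[θ, ∞)` the function `V` equals `Z`, so `J θN = G θN + γ Z = G cN - G 0 + γ Z`. Starting
from `cN` instead, the shifted function `V (cN + ·)` is `≥ Z` on `(0, ∞)` and `> Z` on the
interval `(0, θ - cN)` of positive length, where the density `f` is a.e. positive; hence its
`f`-average is strictly larger than `Z`, i.e. `J cN > G cN + γ Z`. Since `J c''` is the maximum
of `J` on `(-∞, cN]`, we get `J c'' - G 0 ≥ J cN - G 0 > J θN`.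
-/

open MeasureTheory Set Filter

section WeightedAverage

variable {α : Type*} [MeasurableSpace α] {μ : Measure α} {s : Set α} {f g : α → ℝ}
  {Z : ℝ}

lemma setIntegral_mul_eq_of_eqOn_const (hs : MeasurableSet s) (hf1 : ∫ x in s, f x ∂μ = 1)
    (hg : EqOn g (fun _ ↦ Z) s) : ∫ x in s, f x * g x ∂μ = Z := by
  rw [setIntegral_congr_fun hs fun x hx ↦ by rw [hg hx], integral_mul_const, hf1, one_mul]

lemma lt_setIntegral_mul_of_lt_on (hs : MeasurableSet s) (hf : IntegrableOn f s μ)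
    (hfg : IntegrableOn (fun x ↦ f x * g x) s μ) (hf1 : ∫ x in s, f x ∂μ = 1)
    (hfnn : ∀ x ∈ s, 0 ≤ f x) (hg : ∀ x ∈ s, Z ≤ g x) {t : Set α} (hts : t ⊆ s)
    (ht : 0 < μ t) (hft : ∀ᵐ x ∂μ, x ∈ t → 0 < f x) (hgt : ∀ x ∈ t, Z < g x) :
    Z < ∫ x in s, f x * g x ∂μ := by
  have hdiff_int : IntegrableOn (fun x ↦ f x * g x - f x * Z) s μ := hfg.sub (hf.mul_const Z)
  have hdiff_nonneg : 0 ≤ᵐ[μ.restrict s] fun x ↦ f x * g x - f x * Z :=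
    ae_restrict_of_forall_mem hs fun x hx ↦
      sub_nonneg.2 (mul_le_mul_of_nonneg_left (hg x hx) (hfnn x hx))
  have hsupport :
      t ≤ᵐ[μ] ((Function.support fun x ↦ f x * g x - f x * Z) ∩ s : Set α) := by
    filter_upwards [hft] with x hfx hxt
    refine ⟨?_, hts hxt⟩
    rw [Function.mem_support, ← mul_sub]
    exact (mul_pos (hfx hxt) (sub_pos.2 (hgt x hxt))).ne'
  have hpos : 0 < ∫ x in s, f x * g x - f x * Z ∂μ :=
    (setIntegral_pos_iff_support_of_nonneg_ae hdiff_nonneg hdiff_int).2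
      (ht.trans_le (measure_mono_ae hsupport))
  rw [integral_sub hfg (hf.mul_const Z), integral_mul_const, hf1, one_mul] at hpos
  linarith

end WeightedAverage

lemma MeasureTheory.IntegrableOn.mul_antitoneOn {β : Type*} [LinearOrder β] [TopologicalSpace β]
    [OrderClosedTopology β] [MeasurableSpace β] [BorelSpace β] {μ : Measure β} {s : Set β}
    {f g : β → ℝ} {a b : ℝ} (hf : IntegrableOn f s μ) (hs : MeasurableSet s)
    (hg : AntitoneOn g s) (hgs : MapsTo g s (Icc a b)) : IntegrableOn (fun x ↦ f x * g x) s μ :=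
  Integrable.mul_bdd (c := max |a| |b|) hf
    (aemeasurable_restrict_of_antitoneOn hs hg).aestronglyMeasurable
    (ae_restrict_of_forall_mem hs fun _ hx ↦ abs_le_max_abs_abs (hgs hx).1 (hgs hx).2)

theorem stmt_8_general
    (cN : ℝ) (G : ℝ → ℝ)
    (θN : ℝ) (hGθN : G θN = G cN - G 0)
    (f : ℝ → ℝ) (γ : ℝ)
    (hfnn : ∀ x, 0 ≤ f x)
    (hf1 : (∫ x in Ioi (0:ℝ), f x) = 1) (hγ : γ ∈ Ioo (0:ℝ) 1)
    (hfpos : ∀ᵐ x ∂volume, 0 < x → 0 < f x)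
    (Z θ : ℝ) (hθ : θ ∈ Ioc cN θN)
    (V : ℝ → ℝ)
    (hVanti : AntitoneOn V (Ici cN))
    (hVZ : ∀ y, θ ≤ y → V y = Z)
    (hVgt : ∀ y, cN ≤ y → y < θ → Z < V y)
    (J : ℝ → ℝ) (hJ : ∀ s, J s = G s + γ * ∫ x in Ioi (0:ℝ), f x * V (s + x))
    (c'' : ℝ)
    (hmax : ∀ s ∈ Iic cN, J s ≤ J c'') :
    J θN < J c'' - G 0 := by
  obtain ⟨hcNθ, hθθN⟩ := hθ
  have hf : IntegrableOn f (Ioi 0) :=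
    Integrable.of_integral_ne_zero (by rw [hf1]; exact one_ne_zero)
  have hVge : ∀ y, cN ≤ y → Z ≤ V y := fun y hy ↦
    (le_or_gt θ y).elim (fun h ↦ (hVZ y h).ge) fun h ↦ (hVgt y hy h).le
  have hJθN : J θN = G θN + γ * Z := by
    rw [hJ, setIntegral_mul_eq_of_eqOn_const measurableSet_Ioi hf1 fun x hx ↦
      hVZ _ (by linarith [mem_Ioi.1 hx])]
  have hshift : MapsTo (cN + ·) (Ioi 0) (Ici cN) := fun x hx ↦
    mem_Ici.2 (le_add_of_nonneg_right (le_of_lt hx))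
  have hshift_anti : AntitoneOn (fun x ↦ V (cN + x)) (Ioi 0) := fun x hx y hy hxy ↦
    hVanti (hshift hx) (hshift hy) (add_le_add_right hxy cN)
  have hshift_bdd : MapsTo (fun x ↦ V (cN + x)) (Ioi 0) (Icc Z (V cN)) := fun x hx ↦
    ⟨hVge _ (hshift hx), hVanti self_mem_Ici (hshift hx) (hshift hx)⟩
  have hZlt : Z < ∫ x in Ioi (0:ℝ), f x * V (cN + x) :=
    lt_setIntegral_mul_of_lt_on (t := Ioo 0 (θ - cN)) measurableSet_Ioi hf
      (hf.mul_antitoneOn measurableSet_Ioi hshift_anti hshift_bdd) hf1 (fun x _ ↦ hfnn x)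
      (fun x hx ↦ (hshift_bdd hx).1) Ioo_subset_Ioi_self
      ((Measure.measure_Ioo_pos volume).2 (sub_pos.2 hcNθ))
      (hfpos.mono fun x hx hxt ↦ hx hxt.1)
      fun x hxt ↦ hVgt _ (by linarith [hxt.1]) (by linarith [hxt.2])
  have hJcN := hmax cN self_mem_Iic
  rw [hJ cN] at hJcN
  rw [hJθN, hGθN]
  linarith [mul_lt_mul_of_pos_left hZlt hγ.1]

theorem stmt_8
    (cN t₀ : ℝ) (G : ℝ → ℝ)
    (hcN : cN < 0) (ht₀ : 0 < t₀)
    (hGcont : ContinuousOn G (Iio t₀))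
    (hGinc : StrictMonoOn G (Iic cN))
    (hGdec : StrictAntiOn G (Ico cN t₀))
    (hGtop : Tendsto G (nhdsWithin t₀ (Iio t₀)) atBot)
    (hGbot : Tendsto G atBot atBot)
    (hG0 : 0 < G 0)
    (θN : ℝ) (hθN : θN ∈ Ioo cN t₀) (hGθN : G θN = G cN - G 0)
    (θN' : ℝ) (hθN' : θN' < cN) (hGθN' : G θN' = G cN - G 0)
    (f : ℝ → ℝ) (γ : ℝ)
    (hfm : Measurable f) (hf0 : ∀ x ≤ 0, f x = 0) (hfnn : ∀ x, 0 ≤ f x)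
    (hf1 : (∫ x in Ioi (0:ℝ), f x) = 1) (hγ : γ ∈ Ioo (0:ℝ) 1)
    (hfpos : ∀ᵐ x ∂volume, 0 < x → 0 < f x)
    (Z θ : ℝ) (hθ : θ ∈ Ioc cN θN)
    (V : ℝ → ℝ) (hVcont : Continuous V)
    (hVub : ∀ y, V y ≤ Z + G 0)
    (hVlb : ∀ r : ℝ, BddBelow (V '' Ici r))
    (hVanti : AntitoneOn V (Ici cN))
    (hVZ : ∀ y, θ ≤ y → V y = Z)
    (hVgt : ∀ y, cN ≤ y → y < θ → Z < V y)
    (c' : ℝ) (hc' : c' ∈ Ioc θN' cN) (hVc' : V c' = Z + G 0)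
    (J : ℝ → ℝ) (hJ : ∀ s, J s = G s + γ * ∫ x in Ioi (0:ℝ), f x * V (s + x))
    (c'' : ℝ) (hc'' : c'' ∈ Iic cN)
    (hmax : ∀ s ∈ Iic cN, J s ≤ J c'') :
    J θN < J c'' - G 0 :=
  stmt_8_general cN G θN hGθN f γ hfnn hf1 hγ hfpos Z θ hθ V hVanti hVZ hVgt J hJ c'' hmax
end

section
/- Set Z'' := (max_{s ≤ c_N} J(s)) − G(0), the maximum being attained. Then there exists a unique θ'' ∈ (c_N, θ_N) with J(θ'') = Z''. -/
open MeasureTheory Set Filter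

/-!
Write `J = G + γ I` with `I = shiftedMean f V`. On `[c_N, θ_N]` the function `G` is strictly
decreasing and `I` is antitone (as `V` is) and continuous (dominated convergence), so by the
intermediate value theorem it suffices that `J θ_N < J c'' - G 0 < J c_N`. The left inequality
comes from `G θ_N = G c_N - G 0`, `J c_N ≤ J c''` and `I θ_N < I c_N`: jumps shorter than `θ - c_N`
carry positive `f`-mass and move `c_N` to where `V > Z`, but `θ_N` to where `V = Z`. The right one
comes from `G c'' ≤ G c_N`, `I c'' ≤ Z + G 0 ≤ I c_N + G 0` and `γ G 0 < G 0`.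
-/

theorem integral_lt_integral_of_ae_le_of_measure_setOf_lt_ne_zero {α : Type*}
    [MeasurableSpace α] {μ : Measure α} {f g : α → ℝ} (hf : Integrable f μ) (hg : Integrable g μ)
    (hle : f ≤ᵐ[μ] g) (hlt : μ {x | f x < g x} ≠ 0) :
    ∫ x, f x ∂μ < ∫ x, g x ∂μ := by
  rw [← sub_pos, ← integral_sub hg hf,
    integral_pos_iff_support_of_nonneg_ae (hle.mono fun x => sub_nonneg.2) (hg.sub hf)]
  exact pos_iff_ne_zero.2 (mt (measure_mono_null fun x hx => (sub_pos.2 hx).ne') hlt)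

section WeightedMean

variable {α : Type*} [MeasurableSpace α] {μ : Measure α} {s : Set α} {f g : α → ℝ} {b : ℝ}

theorem setIntegral_mul_le_of_le (hs : MeasurableSet s)
    (hfg : IntegrableOn (fun x => f x * g x) s μ)
    (hf0 : ∀ x ∈ s, 0 ≤ f x) (hf1 : ∫ x in s, f x ∂μ = 1) (hg : ∀ x ∈ s, g x ≤ b) :
    ∫ x in s, f x * g x ∂μ ≤ b := by
  have hf : IntegrableOn f s μ := Integrable.of_integral_ne_zero (by rw [hf1]; exact one_ne_zero)
  calc ∫ x in s, f x * g x ∂μ ≤ ∫ x in s, f x * b ∂μ :=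
        setIntegral_mono_on hfg (hf.mul_const b) hs
          fun x hx => mul_le_mul_of_nonneg_left (hg x hx) (hf0 x hx)
    _ = b := by rw [integral_mul_const, hf1, one_mul]

theorem le_setIntegral_mul_of_le (hs : MeasurableSet s)
    (hfg : IntegrableOn (fun x => f x * g x) s μ)
    (hf0 : ∀ x ∈ s, 0 ≤ f x) (hf1 : ∫ x in s, f x ∂μ = 1) (hg : ∀ x ∈ s, b ≤ g x) :
    b ≤ ∫ x in s, f x * g x ∂μ := by
  have hf : IntegrableOn f s μ := Integrable.of_integral_ne_zero (by rw [hf1]; exact one_ne_zero)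
  calc b = ∫ x in s, f x * b ∂μ := by rw [integral_mul_const, hf1, one_mul]
    _ ≤ ∫ x in s, f x * g x ∂μ :=
        setIntegral_mono_on (hf.mul_const b) hfg hs
          fun x hx => mul_le_mul_of_nonneg_left (hg x hx) (hf0 x hx)

theorem setIntegral_mul_lt_setIntegral_mul {t : Set α} {h : α → ℝ} (hs : MeasurableSet s)
    (hts : t ⊆ s) (ht : μ t ≠ 0) (hfg : IntegrableOn (fun x => f x * g x) s μ)
    (hfh : IntegrableOn (fun x => f x * h x) s μ) (hf0 : ∀ x ∈ s, 0 ≤ f x)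
    (hfpos : ∀ᵐ x ∂μ, x ∈ t → 0 < f x) (hle : ∀ x ∈ s, g x ≤ h x) (hlt : ∀ x ∈ t, g x < h x) :
    ∫ x in s, f x * g x ∂μ < ∫ x in s, f x * h x ∂μ := by
  refine integral_lt_integral_of_ae_le_of_measure_setOf_lt_ne_zero hfg hfh
    ((ae_restrict_mem hs).mono fun x hx => mul_le_mul_of_nonneg_left (hle x hx) (hf0 x hx)) ?_
  have hsub : t ≤ᵐ[μ] {x | f x * g x < f x * h x} := by
    filter_upwards [hfpos] with x hfx hxt
    exact mul_lt_mul_of_pos_left (hlt x hxt) (hfx hxt)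
  refine (pos_iff_ne_zero.2 ht).trans_le ?_ |>.ne'
  calc μ t = μ.restrict s t := (Measure.restrict_eq_self μ hts).symm
    _ ≤ _ := measure_mono_ae (ae_restrict_of_ae hsub)

end WeightedMean

noncomputable def shiftedMean (f V : ℝ → ℝ) (s : ℝ) : ℝ := ∫ x in Ioi (0 : ℝ), f x * V (s + x)

section ShiftedMean

variable {f V : ℝ → ℝ} {c : ℝ}

theorem integrableOn_mul_comp_const_add (hf : IntegrableOn f (Ioi 0)) (hV : Measurable V)
    (hVc : Bornology.IsBounded (V '' Ici c)) :
    IntegrableOn (fun x => f x * V (c + x)) (Ioi 0) := by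
  obtain ⟨C, hC⟩ := hVc.exists_norm_le
  refine hf.mul_bdd (c := C) (hV.comp (measurable_const_add c)).aestronglyMeasurable ?_
  filter_upwards [ae_restrict_mem measurableSet_Ioi] with x hx
  exact hC _ (mem_image_of_mem V (by simp only [mem_Ici]; linarith [mem_Ioi.1 hx]))

theorem continuousOn_shiftedMean (hf : IntegrableOn f (Ioi 0)) (hV : Continuous V)
    (hVc : Bornology.IsBounded (V '' Ici c)) : ContinuousOn (shiftedMean f V) (Ici c) := by
  obtain ⟨C, hC⟩ := hVc.exists_norm_le
  refine continuousOn_of_dominated (bound := fun x => ‖f x‖ * C)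
    (fun s _ => hf.aestronglyMeasurable.mul
      (hV.comp (continuous_const_add s)).aestronglyMeasurable) (fun s hs => ?_)
    (hf.norm.mul_const C) (ae_of_all _ fun x => ?_)
  · filter_upwards [ae_restrict_mem measurableSet_Ioi] with x hx
    rw [norm_mul]
    refine mul_le_mul_of_nonneg_left (hC _ (mem_image_of_mem V ?_)) (norm_nonneg _)
    simp only [mem_Ici] at hs ⊢
    linarith [mem_Ioi.1 hx]
  · exact (continuous_const.mul (hV.comp (continuous_add_const x))).continuousOn

theorem antitoneOn_shiftedMean (hf : IntegrableOn f (Ioi 0)) (hf0 : ∀ x ∈ Ioi (0 : ℝ), 0 ≤ f x)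
    (hV : Measurable V) (hVc : Bornology.IsBounded (V '' Ici c)) (hVanti : AntitoneOn V (Ici c)) :
    AntitoneOn (shiftedMean f V) (Ici c) := by
  intro a ha b hb hab
  have hVa := hVc.subset (image_mono (Ici_subset_Ici.2 ha))
  have hVb := hVc.subset (image_mono (Ici_subset_Ici.2 hb))
  refine setIntegral_mono_on (integrableOn_mul_comp_const_add hf hV hVb)
    (integrableOn_mul_comp_const_add hf hV hVa) measurableSet_Ioi fun x hx => ?_
  simp only [mem_Ici, mem_Ioi] at ha hb hx
  exact mul_le_mul_of_nonneg_left
    (hVanti (by simp only [mem_Ici]; linarith) (by simp only [mem_Ici]; linarith) (by linarith))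
    (hf0 x hx)

theorem shiftedMean_lt_shiftedMean {θ d Z : ℝ} (hf : IntegrableOn f (Ioi 0))
    (hf0 : ∀ x ∈ Ioi (0 : ℝ), 0 ≤ f x) (hfpos : ∀ᵐ x, 0 < x → 0 < f x) (hV : Measurable V)
    (hVc : Bornology.IsBounded (V '' Ici c)) (hVanti : AntitoneOn V (Ici c))
    (hVle : ∀ y, θ ≤ y → V y ≤ Z) (hVgt : ∀ y, c ≤ y → y < θ → Z < V y) (hcθ : c < θ)
    (hθd : θ ≤ d) : shiftedMean f V d < shiftedMean f V c := by
  have hVd := hVc.subset (image_mono (Ici_subset_Ici.2 (hcθ.le.trans hθd)))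
  refine setIntegral_mul_lt_setIntegral_mul (t := Ioo 0 (θ - c)) measurableSet_Ioi
    Ioo_subset_Ioi_self (by simpa using hcθ) (integrableOn_mul_comp_const_add hf hV hVd)
    (integrableOn_mul_comp_const_add hf hV hVc) hf0 (hfpos.mono fun x hx hxt => hx hxt.1)
    (fun x hx => ?_) fun x hx => ?_
  · simp only [mem_Ioi] at hx
    exact hVanti (by simp only [mem_Ici]; linarith) (by simp only [mem_Ici]; linarith)
      (by linarith)
  · exact (hVle _ (by linarith [hx.1])).trans_lt (hVgt _ (by linarith [hx.1]) (by linarith [hx.2]))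

end ShiftedMean

theorem StrictAntiOn.existsUnique_mem_Ioo_eq {α δ : Type*} [ConditionallyCompleteLinearOrder α]
    [TopologicalSpace α] [OrderTopology α] [DenselyOrdered α] [LinearOrder δ]
    [TopologicalSpace δ] [OrderClosedTopology δ] {J : α → δ} {a b : α} {y : δ} (hab : a ≤ b)
    (hJ : StrictAntiOn J (Icc a b)) (hJc : ContinuousOn J (Icc a b)) (hy : y ∈ Ioo (J b) (J a)) :
    ∃! x, x ∈ Ioo a b ∧ J x = y := by
  obtain ⟨x, hx, rfl⟩ := intermediate_value_Ioo' hab hJc hy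
  exact ⟨x, ⟨hx, rfl⟩, fun x' ⟨hx', hJx'⟩ =>
    hJ.injOn (Ioo_subset_Icc_self hx') (Ioo_subset_Icc_self hx) hJx'⟩

theorem stmt_10_general
    (cN t₀ : ℝ) (G : ℝ → ℝ)
    (hGcont : ContinuousOn G (Iio t₀))
    (hGinc : StrictMonoOn G (Iic cN))
    (hGdec : StrictAntiOn G (Ico cN t₀))
    (hG0 : 0 < G 0)
    (θN : ℝ) (hθN : θN ∈ Ioo cN t₀) (hGθN : G θN = G cN - G 0)
    (f : ℝ → ℝ) (γ : ℝ)
    (hfnn : ∀ x, 0 ≤ f x)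
    (hf1 : (∫ x in Ioi (0:ℝ), f x) = 1) (hγ : γ ∈ Ioo (0:ℝ) 1)
    (hfpos : ∀ᵐ x ∂volume, 0 < x → 0 < f x)
    (Z θ : ℝ) (hθ : θ ∈ Ioc cN θN)
    (V : ℝ → ℝ) (hVcont : Continuous V)
    (hVub : ∀ y, V y ≤ Z + G 0)
    (hVlb : ∀ r : ℝ, BddBelow (V '' Ici r))
    (hVanti : AntitoneOn V (Ici cN))
    (hVZ : ∀ y, θ ≤ y → V y = Z)
    (hVgt : ∀ y, cN ≤ y → y < θ → Z < V y)
    (J : ℝ → ℝ) (hJ : ∀ s, J s = G s + γ * ∫ x in Ioi (0:ℝ), f x * V (s + x))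
    (c'' : ℝ) (hc'' : c'' ∈ Iic cN)
    (hmax : ∀ s ∈ Iic cN, J s ≤ J c'') :
    ∃! θ'' : ℝ, θ'' ∈ Ioo cN θN ∧ J θ'' = J c'' - G 0 := by
  obtain ⟨hγ0, hγ1⟩ := hγ
  replace hJ : ∀ s, J s = G s + γ * shiftedMean f V s := hJ
  have hf : IntegrableOn f (Ioi 0) :=
    Integrable.of_integral_ne_zero (by rw [hf1]; exact one_ne_zero)
  have hf0 : ∀ x ∈ Ioi (0 : ℝ), 0 ≤ f x := fun x _ => hfnn x
  have hVbdd (r : ℝ) : Bornology.IsBounded (V '' Ici r) :=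
    isBounded_iff_bddBelow_bddAbove.2 ⟨hVlb r, Z + G 0, forall_mem_image.2 fun y _ => hVub y⟩
  have hint (r : ℝ) := integrableOn_mul_comp_const_add hf hVcont.measurable (hVbdd r)
  have hZ_le_V (y : ℝ) (hy : cN ≤ y) : Z ≤ V y := by
    rcases lt_or_ge y θ with h | h
    exacts [(hVgt y hy h).le, (hVZ y h).ge]
  have hI_cN : Z ≤ shiftedMean f V cN :=
    le_setIntegral_mul_of_le measurableSet_Ioi (hint cN) hf0 hf1 fun x hx =>
      hZ_le_V _ (by linarith [mem_Ioi.1 hx])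
  have hI_c'' : shiftedMean f V c'' ≤ Z + G 0 :=
    setIntegral_mul_le_of_le measurableSet_Ioi (hint c'') hf0 hf1 fun x _ => hVub _
  have hI_θN : shiftedMean f V θN < shiftedMean f V cN :=
    shiftedMean_lt_shiftedMean hf hf0 hfpos hVcont.measurable (hVbdd cN) hVanti
      (fun y hy => (hVZ y hy).le) hVgt hθ.1 hθ.2
  have hJcont : ContinuousOn J (Icc cN θN) := by
    rw [funext hJ]
    exact (hGcont.mono fun y hy => hy.2.trans_lt hθN.2).add
      (((continuousOn_shiftedMean hf hVcont (hVbdd cN)).mono Icc_subset_Ici_self).const_smul γ)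
  have hJanti : StrictAntiOn J (Icc cN θN) := by
    have hI := antitoneOn_shiftedMean hf hf0 hVcont.measurable (hVbdd cN) hVanti
    rw [funext hJ]
    exact (hGdec.mono (Icc_subset_Ico_right hθN.2)).add_antitone fun a ha b hb hab =>
      mul_le_mul_of_nonneg_left (hI ha.1 hb.1 hab) hγ0.le
  refine hJanti.existsUnique_mem_Ioo_eq hθN.1.le hJcont ⟨?_, ?_⟩
  · have hJmax : J cN ≤ J c'' := hmax cN self_mem_Iic
    rw [hJ cN] at hJmax
    rw [hJ θN, hGθN]
    linarith [mul_lt_mul_of_pos_left hI_θN hγ0]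
  · have hG : G c'' ≤ G cN := hGinc.monotoneOn hc'' self_mem_Iic hc''
    rw [hJ c'', hJ cN]
    linarith [mul_le_mul_of_nonneg_left hI_c'' hγ0.le, mul_le_mul_of_nonneg_left hI_cN hγ0.le,
      mul_lt_mul_of_pos_right hγ1 hG0]

theorem stmt_10
    (cN t₀ : ℝ) (G : ℝ → ℝ)
    (hcN : cN < 0) (ht₀ : 0 < t₀)
    (hGcont : ContinuousOn G (Iio t₀))
    (hGinc : StrictMonoOn G (Iic cN))
    (hGdec : StrictAntiOn G (Ico cN t₀))
    (hGtop : Tendsto G (nhdsWithin t₀ (Iio t₀)) atBot)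
    (hGbot : Tendsto G atBot atBot)
    (hG0 : 0 < G 0)
    (θN : ℝ) (hθN : θN ∈ Ioo cN t₀) (hGθN : G θN = G cN - G 0)
    (θN' : ℝ) (hθN' : θN' < cN) (hGθN' : G θN' = G cN - G 0)
    (f : ℝ → ℝ) (γ : ℝ)
    (hfm : Measurable f) (hf0 : ∀ x ≤ 0, f x = 0) (hfnn : ∀ x, 0 ≤ f x)
    (hf1 : (∫ x in Ioi (0:ℝ), f x) = 1) (hγ : γ ∈ Ioo (0:ℝ) 1)
    (hfpos : ∀ᵐ x ∂volume, 0 < x → 0 < f x)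
    (Z θ : ℝ) (hθ : θ ∈ Ioc cN θN)
    (V : ℝ → ℝ) (hVcont : Continuous V)
    (hVub : ∀ y, V y ≤ Z + G 0)
    (hVlb : ∀ r : ℝ, BddBelow (V '' Ici r))
    (hVanti : AntitoneOn V (Ici cN))
    (hVZ : ∀ y, θ ≤ y → V y = Z)
    (hVgt : ∀ y, cN ≤ y → y < θ → Z < V y)
    (c' : ℝ) (hc' : c' ∈ Ioc θN' cN) (hVc' : V c' = Z + G 0)
    (J : ℝ → ℝ) (hJ : ∀ s, J s = G s + γ * ∫ x in Ioi (0:ℝ), f x * V (s + x))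
    (c'' : ℝ) (hc'' : c'' ∈ Iic cN)
    (hmax : ∀ s ∈ Iic cN, J s ≤ J c'') :
    ∃! θ'' : ℝ, θ'' ∈ Ioo cN θN ∧ J θ'' = J c'' - G 0 :=
  stmt_10_general cN t₀ G hGcont hGinc hGdec hG0 θN hθN hGθN f γ hfnn hf1 hγ hfpos Z θ hθ V hVcont
    hVub hVlb hVanti hVZ hVgt J hJ c'' hc'' hmax
end

section
/- Define the Bellman update W(s) := sup_{a ∈ A(s)} Q_V(s, a). Then there exist θ'' ∈ (c_N, θ_N) and c'' ∈ (θ'_N, c_N] such that, setting Z'' := J(c'') − G(0): (i) for c_N ≤ s ≤ θ'' one has W(s) = J(s) = Q_V(s, s), i.e., the merging action a = s is optimal; (ii) for s > θ'' one has W(s) = Z'' = Q_V(s, c''), i.e., the non-merging action a = c'' is optimal. Moreover W is antitone on [c_N, ∞), W(y) = Z'' for y ≥ θ'', W(y) > Z'' for c_N ≤ y < θ'', W(y) ≤ Z'' + G(0) for all y ∈ ℝ, and W(c'') = Z'' + G(0). -/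
/-!
The merge value `J = G + γ • 𝔼[V (· + X)]` is continuous, and strictly decreasing on `[c_N, t₀)`
because `G` is and `V` is antitone there. Not merging to `a` is worth `J a - G 0`, so from any
`s > c''` the best non-merging value is `J c'' - G 0`, where `c''` maximises `J` on `(-∞, t₀)`.
As `γ < 1` and `V ≤ Z + G 0`, the choice `a = c_N` beats every `a ≤ θ'_N` (where `G` has dropped by
`G 0`), so `c'' ∈ (θ'_N, c_N]`. Finally `J θ_N < J c'' - G 0 < J c_N`, the left inequality because
`V > Z` just right of `c_N`, so the decreasing `J` crosses the non-merging level at some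
`θ'' ∈ (c_N, θ_N)`.
-/

open MeasureTheory Set Filter

noncomputable section

def shiftMean (f V : ℝ → ℝ) (s : ℝ) : ℝ := ∫ x in Ioi 0, f x * V (s + x)

-- `J a - g₀` is the value `Q_V(s, a)` of the non-merging action `a`, with `g₀ = G 0`.
def bellmanUpdate (J : ℝ → ℝ) (g₀ t₀ s : ℝ) : ℝ :=
  if s < t₀ then max (J s) (sSup ((fun a => J a - g₀) '' {a | a < s ∧ a < t₀}))
  else sSup ((fun a => J a - g₀) '' Iio t₀)

end

section ShiftMean

variable {f V : ℝ → ℝ}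

lemma ae_norm_mul_comp_add_le {r s C : ℝ} (hC : ∀ y ∈ V '' Ici r, ‖y‖ ≤ C) (hrs : r ≤ s) :
    ∀ᵐ x ∂volume.restrict (Ioi 0), ‖f x * V (s + x)‖ ≤ ‖f x‖ * C := by
  refine (ae_restrict_iff' measurableSet_Ioi).2 (Eventually.of_forall fun x hx => ?_)
  rw [norm_mul]
  exact mul_le_mul_of_nonneg_left
    (hC _ (mem_image_of_mem V (show r ≤ s + x by linarith [hx.out]))) (norm_nonneg _)

lemma aestronglyMeasurable_mul_comp_add (hf : IntegrableOn f (Ioi 0)) (hV : Continuous V)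
    (s : ℝ) :
    AEStronglyMeasurable (fun x => f x * V (s + x)) (volume.restrict (Ioi 0)) :=
  hf.aestronglyMeasurable.mul (by fun_prop : Continuous fun x => V (s + x)).aestronglyMeasurable

lemma integrableOn_mul_comp_add (hf : IntegrableOn f (Ioi 0)) (hV : Continuous V)
    (hVbdd : ∀ r, Bornology.IsBounded (V '' Ici r)) (s : ℝ) :
    IntegrableOn (fun x => f x * V (s + x)) (Ioi 0) := by
  obtain ⟨C, hC⟩ := (hVbdd s).exists_norm_le
  exact (hf.norm.mul_const C).mono' (aestronglyMeasurable_mul_comp_add hf hV s)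
    (ae_norm_mul_comp_add_le hC le_rfl)

lemma continuous_shiftMean (hf : IntegrableOn f (Ioi 0)) (hV : Continuous V)
    (hVbdd : ∀ r, Bornology.IsBounded (V '' Ici r)) : Continuous (shiftMean f V) := by
  refine continuous_iff_continuousAt.2 fun s₀ => ?_
  obtain ⟨C, hC⟩ := (hVbdd (s₀ - 1)).exists_norm_le
  refine continuousAt_of_dominated
    (Eventually.of_forall (aestronglyMeasurable_mul_comp_add hf hV))
    ((eventually_ge_nhds (by linarith : s₀ - 1 < s₀)).mono fun s hs =>
      ae_norm_mul_comp_add_le hC hs)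
    (hf.norm.mul_const C) (ae_of_all _ fun x => by fun_prop)

lemma shiftMean_le {s b : ℝ} (hint : IntegrableOn (fun x => f x * V (s + x)) (Ioi 0))
    (hf : IntegrableOn f (Ioi 0)) (hfnn : ∀ x, 0 ≤ f x) (hf1 : ∫ x in Ioi 0, f x = 1)
    (h : ∀ x > 0, V (s + x) ≤ b) : shiftMean f V s ≤ b :=
  calc shiftMean f V s ≤ ∫ x in Ioi 0, f x * b :=
        setIntegral_mono_on hint (hf.mul_const b) measurableSet_Ioi
          fun x hx => mul_le_mul_of_nonneg_left (h x hx) (hfnn x)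
    _ = b := by rw [integral_mul_const, hf1, one_mul]

lemma le_shiftMean {s b : ℝ} (hint : IntegrableOn (fun x => f x * V (s + x)) (Ioi 0))
    (hf : IntegrableOn f (Ioi 0)) (hfnn : ∀ x, 0 ≤ f x) (hf1 : ∫ x in Ioi 0, f x = 1)
    (h : ∀ x > 0, b ≤ V (s + x)) : b ≤ shiftMean f V s :=
  calc b = ∫ x in Ioi 0, f x * b := by rw [integral_mul_const, hf1, one_mul]
    _ ≤ shiftMean f V s :=
        setIntegral_mono_on (hf.mul_const b) hint measurableSet_Ioi
          fun x hx => mul_le_mul_of_nonneg_left (h x hx) (hfnn x)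

lemma shiftMean_eq_of_forall {s b : ℝ}
    (hint : IntegrableOn (fun x => f x * V (s + x)) (Ioi 0)) (hf : IntegrableOn f (Ioi 0))
    (hfnn : ∀ x, 0 ≤ f x) (hf1 : ∫ x in Ioi 0, f x = 1) (h : ∀ x > 0, V (s + x) = b) :
    shiftMean f V s = b :=
  le_antisymm (shiftMean_le hint hf hfnn hf1 fun x hx => (h x hx).le)
    (le_shiftMean hint hf hfnn hf1 fun x hx => (h x hx).ge)

lemma lt_shiftMean {s b δ : ℝ} (hint : IntegrableOn (fun x => f x * V (s + x)) (Ioi 0))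
    (hf : IntegrableOn f (Ioi 0)) (hfnn : ∀ x, 0 ≤ f x) (hf1 : ∫ x in Ioi 0, f x = 1)
    (hfpos : ∀ᵐ x ∂volume, 0 < x → 0 < f x) (h : ∀ x > 0, b ≤ V (s + x)) (hδ : 0 < δ)
    (hlt : ∀ x ∈ Ioo 0 δ, b < V (s + x)) : b < shiftMean f V s := by
  set g : ℝ → ℝ := fun x => f x * V (s + x) - f x * b
  have hg_nonneg : 0 ≤ᵐ[volume.restrict (Ioi 0)] g :=
    (ae_restrict_iff' measurableSet_Ioi).2 (Eventually.of_forall fun x hx =>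
      sub_nonneg.2 (mul_le_mul_of_nonneg_left (h x hx) (hfnn x)))
  have hg_pos : Ioo 0 δ ≤ᵐ[volume] (Function.support g ∩ Ioi 0 : Set ℝ) := by
    filter_upwards [hfpos] with x hfx hx
    have : 0 < f x * (V (s + x) - b) := mul_pos (hfx hx.1) (sub_pos.2 (hlt x hx))
    refine ⟨?_, hx.1⟩
    rw [Function.mem_support, show g x = f x * (V (s + x) - b) by ring]
    exact this.ne'
  have hpos : 0 < ∫ x in Ioi 0, g x := by
    rw [setIntegral_pos_iff_support_of_nonneg_ae hg_nonneg (hint.sub (hf.mul_const b))]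
    refine lt_of_lt_of_le ?_ (measure_mono_ae hg_pos)
    simpa using hδ
  rw [integral_sub hint (hf.mul_const b), integral_mul_const, hf1, one_mul] at hpos
  exact sub_pos.1 hpos

lemma antitoneOn_shiftMean {c : ℝ}
    (hint : ∀ s, IntegrableOn (fun x => f x * V (s + x)) (Ioi 0)) (hfnn : ∀ x, 0 ≤ f x)
    (hV : AntitoneOn V (Ici c)) : AntitoneOn (shiftMean f V) (Ici c) :=
  fun u hu v _ huv => setIntegral_mono_on (hint v) (hint u) measurableSet_Ioi fun x hx =>
    mul_le_mul_of_nonneg_left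
      (hV (show c ≤ u + x by linarith [hu.out, hx.out])
        (show c ≤ v + x by linarith [hu.out, hx.out]) (by linarith)) (hfnn x)

end ShiftMean

lemma exists_forall_le_of_lt_left {J : ℝ → ℝ} {a b t : ℝ} (hab : a ≤ b) (hbt : b < t)
    (hcont : ContinuousOn J (Icc a b)) (hleft : ∀ x ≤ a, J x < J b)
    (hright : StrictAntiOn J (Ico b t)) : ∃ c ∈ Ioc a b, ∀ x < t, J x ≤ J c := by
  obtain ⟨c, hc, hmax⟩ := isCompact_Icc.exists_isMaxOn (nonempty_Icc.2 hab) hcont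
  have hbc : J b ≤ J c := hmax ⟨hab, le_rfl⟩
  refine ⟨c, ⟨hc.1.lt_of_ne ?_, hc.2⟩, fun x hx => ?_⟩
  · rintro rfl
    exact (hleft a le_rfl).not_ge hbc
  rcases le_or_gt x a with hxa | hax
  · exact (hleft x hxa).le.trans hbc
  rcases le_or_gt x b with hxb | hbx
  · exact hmax ⟨hax.le, hxb⟩
  · exact (hright ⟨le_rfl, hbt⟩ ⟨hbx.le, hx⟩ hbx).le.trans hbc

lemma csSup_image_eq_of_forall_le {α β : Type*} [ConditionallyCompleteLattice β] {φ : α → β}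
    {S : Set α} {c : α} (hc : c ∈ S) (h : ∀ a ∈ S, φ a ≤ φ c) : sSup (φ '' S) = φ c :=
  IsGreatest.csSup_eq ⟨mem_image_of_mem φ hc, forall_mem_image.2 h⟩

namespace MergeProblem

variable {G I J : ℝ → ℝ} {cN t₀ γ Z : ℝ}

lemma add_mul_lt_of_add_le (hJ : ∀ s, J s = G s + γ * I s) (hG0 : 0 < G 0)
    (hγ : γ ∈ Ioo 0 1) (hIcN : Z ≤ I cN) {x i : ℝ} (hx : x + G 0 ≤ G cN) (hi : i ≤ Z + G 0) :
    x + γ * i < J cN := by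
  -- the slack `(1 - γ) * G 0 > 0` pays for the gap between `i ≤ Z + G 0` and `Z ≤ I cN`
  rw [hJ]
  nlinarith [mul_le_mul_of_nonneg_left hi hγ.1.le, mul_le_mul_of_nonneg_left hIcN hγ.1.le,
    mul_pos (sub_pos.2 hγ.2) hG0]

lemma exists_maximizer {θN' : ℝ} (hJ : ∀ s, J s = G s + γ * I s) (hG0 : 0 < G 0)
    (hγ : γ ∈ Ioo 0 1) (hGinc : StrictMonoOn G (Iic cN)) (hθN' : θN' < cN)
    (hGθN' : G θN' = G cN - G 0) (hIub : ∀ y, I y ≤ Z + G 0) (hIcN : Z ≤ I cN)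
    (hcN : cN < t₀) (hJcont : ContinuousOn J (Iio t₀)) (hJdec : StrictAntiOn J (Ico cN t₀)) :
    ∃ c ∈ Ioc θN' cN, ∀ a < t₀, J a ≤ J c := by
  refine exists_forall_le_of_lt_left hθN'.le hcN
    (hJcont.mono fun x hx => hx.2.trans_lt hcN) (fun a ha => ?_) hJdec
  have hGa : G a ≤ G θN' := hGinc.monotoneOn (show a ≤ cN by linarith) hθN'.le ha
  rw [hJ a]
  exact add_mul_lt_of_add_le hJ hG0 hγ hIcN (by linarith) (hIub a)

lemma exists_threshold {θN c : ℝ} (hJ : ∀ s, J s = G s + γ * I s) (hG0 : 0 < G 0)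
    (hγ : γ ∈ Ioo 0 1) (hθN : θN ∈ Ioo cN t₀) (hGθN : G θN = G cN - G 0) (hIθN : I θN = Z)
    (hIcN : Z < I cN) (hIub : ∀ y, I y ≤ Z + G 0) (hJcont : ContinuousOn J (Iio t₀))
    (hGc : G c ≤ G cN) (hc : J cN ≤ J c) : ∃ θ'' ∈ Ioo cN θN, J θ'' = J c - G 0 := by
  have hlo : J θN < J c - G 0 := by
    have := mul_lt_mul_of_pos_left hIcN hγ.1
    rw [hJ θN, hIθN, hGθN]
    linarith [hJ cN]
  have hhi : J c - G 0 < J cN := by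
    have := add_mul_lt_of_add_le hJ hG0 hγ hIcN.le (x := G c - G 0) (by linarith) (hIub c)
    linarith [hJ c]
  exact intermediate_value_Ioo' hθN.1.le (hJcont.mono fun x hx => hx.2.trans_lt hθN.2)
    ⟨hlo, hhi⟩

lemma exists_maximizer_threshold {θN θN' : ℝ} (hJ : ∀ s, J s = G s + γ * I s)
    (hGcont : ContinuousOn G (Iio t₀)) (hGinc : StrictMonoOn G (Iic cN))
    (hGdec : StrictAntiOn G (Ico cN t₀)) (hG0 : 0 < G 0) (hθN : θN ∈ Ioo cN t₀)
    (hGθN : G θN = G cN - G 0) (hθN' : θN' < cN) (hGθN' : G θN' = G cN - G 0)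
    (hγ : γ ∈ Ioo 0 1) (hIcont : Continuous I) (hIanti : AntitoneOn I (Ici cN))
    (hIub : ∀ y, I y ≤ Z + G 0) (hIθN : I θN = Z) (hIcN : Z < I cN) :
    StrictAntiOn J (Ico cN t₀) ∧ ∃ c ∈ Ioc θN' cN, (∀ a < t₀, J a ≤ J c) ∧
      ∃ θ'' ∈ Ioo cN θN, J θ'' = J c - G 0 := by
  have hcN : cN < t₀ := hθN.1.trans hθN.2
  have hJdec : StrictAntiOn J (Ico cN t₀) := by
    rw [funext hJ]
    exact hGdec.add_antitone fun u hu v hv huv =>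
      mul_le_mul_of_nonneg_left (hIanti hu.1 hv.1 huv) hγ.1.le
  have hJcont : ContinuousOn J (Iio t₀) := by
    rw [funext hJ]
    exact hGcont.add (continuous_const.mul hIcont).continuousOn
  obtain ⟨c, hc, hmax⟩ :=
    exists_maximizer hJ hG0 hγ hGinc hθN' hGθN' hIub hIcN.le hcN hJcont hJdec
  exact ⟨hJdec, c, hc, hmax, exists_threshold hJ hG0 hγ hθN hGθN hIθN hIcN hIub hJcont
    (hGinc.monotoneOn hc.2 self_mem_Iic hc.2) (hmax cN hcN)⟩

end MergeProblem

section BellmanUpdate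

variable {J : ℝ → ℝ} {g₀ t₀ c cN θ : ℝ}

lemma sSup_nonmerging_le (hmax : ∀ a < t₀, J a ≤ J c) (s : ℝ) :
    sSup ((fun a => J a - g₀) '' {a | a < s ∧ a < t₀}) ≤ J c - g₀ := by
  refine csSup_le ⟨_, mem_image_of_mem _ (show min s t₀ - 1 ∈ {a | a < s ∧ a < t₀} from
    ⟨by linarith [min_le_left s t₀], by linarith [min_le_right s t₀]⟩)⟩ ?_
  rintro _ ⟨a, ⟨-, ha⟩, rfl⟩
  linarith [hmax a ha]

lemma bellmanUpdate_le (hmax : ∀ a < t₀, J a ≤ J c) (hct : c < t₀) (hg₀ : 0 ≤ g₀) (s : ℝ) :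
    bellmanUpdate J g₀ t₀ s ≤ J c := by
  unfold bellmanUpdate
  split_ifs with hs
  · exact max_le (hmax s hs) ((sSup_nonmerging_le hmax s).trans (by linarith))
  · rw [csSup_image_eq_of_forall_le (mem_Iio.2 hct) fun a ha => by linarith [hmax a ha]]
    linarith

lemma bellmanUpdate_self (hmax : ∀ a < t₀, J a ≤ J c) (hct : c < t₀) (hg₀ : 0 ≤ g₀) :
    bellmanUpdate J g₀ t₀ c = J c := by
  rw [bellmanUpdate, if_pos hct]
  exact max_eq_left ((sSup_nonmerging_le hmax c).trans (by linarith))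

lemma bellmanUpdate_eq_of_le (hmax : ∀ a < t₀, J a ≤ J c) (hJdec : StrictAntiOn J (Ico cN t₀))
    (hθt : θ < t₀) (hJθ : J θ = J c - g₀) {s : ℝ} (hs : cN ≤ s) (hsθ : s ≤ θ) :
    bellmanUpdate J g₀ t₀ s = J s := by
  rw [bellmanUpdate, if_pos (hsθ.trans_lt hθt)]
  refine max_eq_left ((sSup_nonmerging_le hmax s).trans ?_)
  rw [← hJθ]
  exact hJdec.antitoneOn ⟨hs, hsθ.trans_lt hθt⟩ ⟨hs.trans hsθ, hθt⟩ hsθ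

lemma bellmanUpdate_eq_of_ge (hmax : ∀ a < t₀, J a ≤ J c) (hJdec : StrictAntiOn J (Ico cN t₀))
    (hc : c ≤ cN) (hθ : cN ≤ θ) (hθt : θ < t₀) (hJθ : J θ = J c - g₀) {s : ℝ} (hs : θ ≤ s) :
    bellmanUpdate J g₀ t₀ s = J c - g₀ := by
  rcases hs.eq_or_lt with rfl | hθs
  · exact (bellmanUpdate_eq_of_le hmax hJdec hθt hJθ hθ le_rfl).trans hJθ
  have hcs : c < s := by linarith
  unfold bellmanUpdate
  split_ifs with hst
  · rw [csSup_image_eq_of_forall_le (S := {a | a < s ∧ a < t₀}) ⟨hcs, hcs.trans hst⟩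
      fun a ha => by linarith [hmax a ha.2]]
    exact max_eq_right (hJθ ▸ (hJdec ⟨hθ, hθt⟩ ⟨by linarith, hst⟩ hθs).le)
  · exact csSup_image_eq_of_forall_le (show c < t₀ by linarith) fun a ha => by linarith [hmax a ha]

lemma lt_bellmanUpdate (hmax : ∀ a < t₀, J a ≤ J c) (hJdec : StrictAntiOn J (Ico cN t₀))
    (hθt : θ < t₀) (hJθ : J θ = J c - g₀) {s : ℝ} (hs : cN ≤ s) (hsθ : s < θ) :
    J c - g₀ < bellmanUpdate J g₀ t₀ s := by
  rw [bellmanUpdate_eq_of_le hmax hJdec hθt hJθ hs hsθ.le, ← hJθ]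
  exact hJdec ⟨hs, hsθ.trans hθt⟩ ⟨hs.trans hsθ.le, hθt⟩ hsθ

lemma antitoneOn_bellmanUpdate (hmax : ∀ a < t₀, J a ≤ J c)
    (hJdec : StrictAntiOn J (Ico cN t₀)) (hc : c ≤ cN) (hθ : cN ≤ θ) (hθt : θ < t₀)
    (hJθ : J θ = J c - g₀) : AntitoneOn (bellmanUpdate J g₀ t₀) (Ici cN) := by
  intro u hu v hv huv
  rcases le_or_gt v θ with hvθ | hθv
  · rw [bellmanUpdate_eq_of_le hmax hJdec hθt hJθ hu (huv.trans hvθ),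
      bellmanUpdate_eq_of_le hmax hJdec hθt hJθ hv hvθ]
    exact hJdec.antitoneOn ⟨hu, by linarith⟩ ⟨hv, by linarith⟩ huv
  rw [bellmanUpdate_eq_of_ge hmax hJdec hc hθ hθt hJθ hθv.le]
  rcases le_or_gt u θ with huθ | hθu
  · rw [bellmanUpdate_eq_of_le hmax hJdec hθt hJθ hu huθ, ← hJθ]
    exact hJdec.antitoneOn ⟨hu, by linarith⟩ ⟨hθ, hθt⟩ huθ
  · rw [bellmanUpdate_eq_of_ge hmax hJdec hc hθ hθt hJθ hθu.le]

end BellmanUpdate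

theorem stmt_11_general
    (cN t₀ : ℝ) (G : ℝ → ℝ)
    (hGcont : ContinuousOn G (Iio t₀))
    (hGinc : StrictMonoOn G (Iic cN))
    (hGdec : StrictAntiOn G (Ico cN t₀))
    (hG0 : 0 < G 0)
    (θN : ℝ) (hθN : θN ∈ Ioo cN t₀) (hGθN : G θN = G cN - G 0)
    (θN' : ℝ) (hθN' : θN' < cN) (hGθN' : G θN' = G cN - G 0)
    (f : ℝ → ℝ) (γ : ℝ)
    (hfnn : ∀ x, 0 ≤ f x)
    (hf1 : (∫ x in Ioi (0:ℝ), f x) = 1) (hγ : γ ∈ Ioo (0:ℝ) 1)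
    (hfpos : ∀ᵐ x ∂volume, 0 < x → 0 < f x)
    (Z θ : ℝ) (hθ : θ ∈ Ioc cN θN)
    (V : ℝ → ℝ) (hVcont : Continuous V)
    (hVub : ∀ y, V y ≤ Z + G 0)
    (hVlb : ∀ r : ℝ, BddBelow (V '' Ici r))
    (hVanti : AntitoneOn V (Ici cN))
    (hVZ : ∀ y, θ ≤ y → V y = Z)
    (hVgt : ∀ y, cN ≤ y → y < θ → Z < V y)
    (J : ℝ → ℝ) (hJ : ∀ s, J s = G s + γ * ∫ x in Ioi (0:ℝ), f x * V (s + x))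
    (W : ℝ → ℝ)
    (hW : ∀ s, W s = if s < t₀
      then max (J s)
        (sSup ((fun a => (G a - G 0) + γ * ∫ x in Ioi (0:ℝ), f x * V (a + x)) ''
          {a | a < s ∧ a < t₀}))
      else sSup ((fun a => (G a - G 0) + γ * ∫ x in Ioi (0:ℝ), f x * V (a + x)) '' Iio t₀)) :
    ∃ θ'' ∈ Ioo cN θN, ∃ c'' ∈ Ioc θN' cN,
      (∀ s, cN ≤ s → s ≤ θ'' → W s = J s) ∧
      (∀ s, θ'' < s → W s = J c'' - G 0) ∧
      (∀ s, θ'' < s →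
        W s = (G c'' - G 0) + γ * ∫ x in Ioi (0:ℝ), f x * V (c'' + x)) ∧
      AntitoneOn W (Ici cN) ∧
      (∀ y, θ'' ≤ y → W y = J c'' - G 0) ∧
      (∀ y, cN ≤ y → y < θ'' → J c'' - G 0 < W y) ∧
      (∀ y, W y ≤ (J c'' - G 0) + G 0) ∧
      W c'' = (J c'' - G 0) + G 0 := by
  have hf : IntegrableOn f (Ioi 0) := .of_integral_ne_zero (by simp [hf1])
  have hVbdd : ∀ r, Bornology.IsBounded (V '' Ici r) := fun r =>
    (hVlb r).isBounded ⟨Z + G 0, forall_mem_image.2 fun y _ => hVub y⟩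
  have hint := integrableOn_mul_comp_add hf hVcont hVbdd
  have hVge : ∀ y, cN ≤ y → Z ≤ V y := fun y hy =>
    (lt_or_ge y θ).elim (fun h => (hVgt y hy h).le) fun h => (hVZ y h).ge
  obtain ⟨hJdec, c, hc, hmax, θ'', hθ'', hJθ''⟩ := MergeProblem.exists_maximizer_threshold hJ
    hGcont hGinc hGdec hG0 hθN hGθN hθN' hGθN' hγ (continuous_shiftMean hf hVcont hVbdd)
    (antitoneOn_shiftMean hint hfnn hVanti)
    (fun s => shiftMean_le (hint s) hf hfnn hf1 fun x _ => hVub _)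
    (shiftMean_eq_of_forall (hint θN) hf hfnn hf1 fun x hx => hVZ _ (by linarith [hθ.2]))
    (lt_shiftMean (hint cN) hf hfnn hf1 hfpos (fun x hx => hVge _ (by linarith))
      (sub_pos.2 hθ.1) fun x hx => hVgt _ (by linarith [hx.1]) (by linarith [hx.2]))
  have hWJ : W = bellmanUpdate J (G 0) t₀ := by
    have hΦ : (fun a => G a - G 0 + γ * ∫ x in Ioi (0:ℝ), f x * V (a + x)) = fun a => J a - G 0 :=
      funext fun a => by rw [hJ]; ring
    funext s
    rw [hW, hΦ, bellmanUpdate]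
  subst hWJ
  have hθt : θ'' < t₀ := hθ''.2.trans hθN.2
  have hct : c < t₀ := hc.2.trans_lt (hθN.1.trans hθN.2)
  have hge := fun s (hs : θ'' ≤ s) =>
    bellmanUpdate_eq_of_ge hmax hJdec hc.2 hθ''.1.le hθt hJθ'' hs
  refine ⟨θ'', hθ'', c, hc, fun s => bellmanUpdate_eq_of_le hmax hJdec hθt hJθ'',
    fun s hs => hge s hs.le, fun s hs => ?_,
    antitoneOn_bellmanUpdate hmax hJdec hc.2 hθ''.1.le hθt hJθ'', hge,
    fun s => lt_bellmanUpdate hmax hJdec hθt hJθ'', fun s => ?_, ?_⟩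
  · rw [hge s hs.le, hJ]
    ring
  · simpa using bellmanUpdate_le hmax hct hG0.le s
  · simpa using bellmanUpdate_self hmax hct hG0.le

theorem stmt_11
    (cN t₀ : ℝ) (G : ℝ → ℝ)
    (hcN : cN < 0) (ht₀ : 0 < t₀)
    (hGcont : ContinuousOn G (Iio t₀))
    (hGinc : StrictMonoOn G (Iic cN))
    (hGdec : StrictAntiOn G (Ico cN t₀))
    (hGtop : Tendsto G (nhdsWithin t₀ (Iio t₀)) atBot)
    (hGbot : Tendsto G atBot atBot)
    (hG0 : 0 < G 0)
    (θN : ℝ) (hθN : θN ∈ Ioo cN t₀) (hGθN : G θN = G cN - G 0)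
    (θN' : ℝ) (hθN' : θN' < cN) (hGθN' : G θN' = G cN - G 0)
    (f : ℝ → ℝ) (γ : ℝ)
    (hfm : Measurable f) (hf0 : ∀ x ≤ 0, f x = 0) (hfnn : ∀ x, 0 ≤ f x)
    (hf1 : (∫ x in Ioi (0:ℝ), f x) = 1) (hγ : γ ∈ Ioo (0:ℝ) 1)
    (hfpos : ∀ᵐ x ∂volume, 0 < x → 0 < f x)
    (Z θ : ℝ) (hθ : θ ∈ Ioc cN θN)
    (V : ℝ → ℝ) (hVcont : Continuous V)
    (hVub : ∀ y, V y ≤ Z + G 0)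
    (hVlb : ∀ r : ℝ, BddBelow (V '' Ici r))
    (hVanti : AntitoneOn V (Ici cN))
    (hVZ : ∀ y, θ ≤ y → V y = Z)
    (hVgt : ∀ y, cN ≤ y → y < θ → Z < V y)
    (c' : ℝ) (hc' : c' ∈ Ioc θN' cN) (hVc' : V c' = Z + G 0)
    (J : ℝ → ℝ) (hJ : ∀ s, J s = G s + γ * ∫ x in Ioi (0:ℝ), f x * V (s + x))
    (W : ℝ → ℝ)
    (hW : ∀ s, W s = if s < t₀
      then max (J s)
        (sSup ((fun a => (G a - G 0) + γ * ∫ x in Ioi (0:ℝ), f x * V (a + x)) ''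
          {a | a < s ∧ a < t₀}))
      else sSup ((fun a => (G a - G 0) + γ * ∫ x in Ioi (0:ℝ), f x * V (a + x)) '' Iio t₀)) :
    ∃ θ'' ∈ Ioo cN θN, ∃ c'' ∈ Ioc θN' cN,
      (∀ s, cN ≤ s → s ≤ θ'' → W s = J s) ∧
      (∀ s, θ'' < s → W s = J c'' - G 0) ∧
      (∀ s, θ'' < s →
        W s = (G c'' - G 0) + γ * ∫ x in Ioi (0:ℝ), f x * V (c'' + x)) ∧
      AntitoneOn W (Ici cN) ∧
      (∀ y, θ'' ≤ y → W y = J c'' - G 0) ∧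
      (∀ y, cN ≤ y → y < θ'' → J c'' - G 0 < W y) ∧
      (∀ y, W y ≤ (J c'' - G 0) + G 0) ∧
      W c'' = (J c'' - G 0) + G 0 :=
  stmt_11_general cN t₀ G hGcont hGinc hGdec hG0 θN hθN hGθN θN' hθN' hGθN' f γ hfnn hf1 hγ hfpos Z
    θ hθ V hVcont hVub hVlb hVanti hVZ hVgt J hJ W hW
end

section
/- Fix N ≥ 1 and define the finite-horizon value functions by backward recursion: V^(N)(s) := max( G(s), sup_{a < s, a < t₀} H(a) ) for s < t₀ and V^(N)(s) := sup_{a < t₀} H(a) for s ≥ t₀, and for k = N−1, ..., 1, V^(k)(s) := sup_{a ∈ A(s)} Q_{V^(k+1)}(s, a). Then for every k ∈ {1, ..., N} the optimal stage-k policy is threshold-based on s ≥ c_N: there exist a threshold θ_k ∈ (c_N, θ_N] and a constant time reduction c_k ∈ (θ'_N, c_N] such that for c_N ≤ s ≤ θ_k the merging action a = s attains the supremum defining V^(k)(s), while for s > θ_k the non-merging action a = c_k attains it (for k = N one may take θ_N and c_N themselves). -/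
/-!
At every stage the continuation value `E = γ · 𝔼[V_{k+1}(· + X)]` is continuous, antitone on
`[c_N, ∞)` and oscillates by less than `G 0`. Hence the value `G a - G 0 + E a` of not merging
tends to `-∞` at both ends of `(-∞, t₀)` and attains its maximum at some `c_k`, which the
oscillation bound confines to `(θ'_N, c_N]`. The value `G s + E s` of merging is strictly
decreasing on `[c_N, t₀)`, so merging wins exactly up to the crossing point `θ_k ∈ (c_N, θ_N]`
given by the intermediate value theorem. The resulting stage value is again antitone on
`[c_N, ∞)`, oscillates by at most `G 0` and has only countably many discontinuities, so by
dominated convergence the next continuation value is continuous with oscillation at most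
`γ G 0 < G 0`.
-/

open MeasureTheory Set Filter Topology

theorem ContinuousOn.exists_isMaxOn_Iio_of_tendsto_atBot {f : ℝ → ℝ} {t : ℝ}
    (hf : ContinuousOn f (Iio t)) (hbot : Tendsto f atBot atBot)
    (htop : Tendsto f (𝓝[<] t) atBot) : ∃ c < t, IsMaxOn f (Iio t) c := by
  obtain ⟨R, hR⟩ := eventually_atBot.1 (hbot.eventually (eventually_lt_atBot (f (t - 1))))
  obtain ⟨u, hut, hu⟩ :=
    mem_nhdsLT_iff_exists_Ioo_subset.1 (htop.eventually (eventually_lt_atBot (f (t - 1))))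
  have hsub : Icc (min R (t - 1)) (max u (t - 1)) ⊆ Iio t :=
    fun x hx => hx.2.trans_lt (max_lt hut (sub_one_lt t))
  have hmem : t - 1 ∈ Icc (min R (t - 1)) (max u (t - 1)) :=
    ⟨min_le_right _ _, le_max_right _ _⟩
  obtain ⟨c, hc, hmax⟩ := isCompact_Icc.exists_isMaxOn ⟨_, hmem⟩ (hf.mono hsub)
  refine ⟨c, hsub hc, fun a ha => ?_⟩
  rcases lt_or_ge a (min R (t - 1)) with hlo | hlo
  · exact (hR a (hlo.le.trans (min_le_left _ _))).le.trans (hmax hmem)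
  rcases le_or_gt a (max u (t - 1)) with hhi | hhi
  · exact hmax ⟨hlo, hhi⟩
  · have hfa : f a < f (t - 1) := hu ⟨(le_max_left _ _).trans_lt hhi, ha⟩
    exact hfa.le.trans (hmax hmem)

theorem IsMaxOn.sSup_image_eq {φ : ℝ → ℝ} {s : Set ℝ} {c : ℝ} (hc : IsMaxOn φ s c)
    (hcs : c ∈ s) : sSup (φ '' s) = φ c :=
  IsGreatest.csSup_eq ⟨mem_image_of_mem φ hcs, forall_mem_image.2 hc⟩

theorem nonempty_setOf_lt_and_lt (s t : ℝ) : {a : ℝ | a < s ∧ a < t}.Nonempty :=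
  ⟨min s t - 1, lt_min_iff.1 (sub_one_lt _)⟩

/-- One stage of the merging problem: `M s` is the value of merging at `s`, `φ a` the value of
the non-merging action `a`. -/
noncomputable def bellman (t₀ : ℝ) (M φ : ℝ → ℝ) (s : ℝ) : ℝ :=
  if s < t₀ then max (M s) (sSup (φ '' {a | a < s ∧ a < t₀})) else sSup (φ '' Iio t₀)

/-- The invariant of the backward induction: what a stage value `V` must satisfy for the
expectation of `V` at the next stage to be continuous, antitone on `[cN, ∞)` and of oscillation
at most `b`. -/
structure IsRegularValue (cN b : ℝ) (V : ℝ → ℝ) : Prop where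
  countable_not_continuousAt : {s | ¬ContinuousAt V s}.Countable
  bddBelow : ∀ r, BddBelow (V '' Ici r)
  antitoneOn : AntitoneOn V (Ici cN)
  le_add : ∀ s t, cN ≤ t → V s ≤ V t + b

section Bellman

variable {t₀ c : ℝ} {M φ : ℝ → ℝ}

theorem sSup_image_setOf_lt_and_lt_le (hc : IsMaxOn φ (Iio t₀) c) (s : ℝ) :
    sSup (φ '' {a | a < s ∧ a < t₀}) ≤ φ c :=
  csSup_le ((nonempty_setOf_lt_and_lt s t₀).image φ) (forall_mem_image.2 fun _ ha => hc ha.2)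

theorem bellman_eq_of_le (hc : IsMaxOn φ (Iio t₀) c) {s : ℝ} (hs : s < t₀)
    (hMs : φ c ≤ M s) : bellman t₀ M φ s = M s := by
  rw [bellman, if_pos hs]
  exact max_eq_left ((sSup_image_setOf_lt_and_lt_le hc s).trans hMs)

theorem bellman_eq_of_lt (hc : IsMaxOn φ (Iio t₀) c) (hct : c < t₀) {s : ℝ} (hcs : c < s)
    (hMs : s < t₀ → M s ≤ φ c) : bellman t₀ M φ s = φ c := by
  unfold bellman
  split_ifs with hs
  · have hc' : IsMaxOn φ {a | a < s ∧ a < t₀} c := hc.on_subset fun _ ha => ha.2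
    rw [hc'.sSup_image_eq ⟨hcs, hct⟩]
    exact max_eq_right (hMs hs)
  · exact hc.sSup_image_eq hct

theorem bellman_le (hc : IsMaxOn φ (Iio t₀) c) (hct : c < t₀) {B : ℝ}
    (hM : ∀ s < t₀, M s ≤ B) (hB : φ c ≤ B) (s : ℝ) : bellman t₀ M φ s ≤ B := by
  unfold bellman
  split_ifs with hs
  · exact max_le (hM s hs) ((sSup_image_setOf_lt_and_lt_le hc s).trans hB)
  · exact (hc.sSup_image_eq hct).trans_le hB

theorem bellman_threshold {cN θ : ℝ} (hc : IsMaxOn φ (Iio t₀) c) (hcθ : c ≤ θ) (hθ : θ < t₀)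
    (hcNθ : cN ≤ θ) (hMθ : M θ = φ c) (hM : AntitoneOn M (Ico cN t₀)) :
    (∀ s, cN ≤ s → s ≤ θ → bellman t₀ M φ s = M s) ∧
      ∀ s, θ < s → bellman t₀ M φ s = φ c :=
  ⟨fun _ hs hsθ => bellman_eq_of_le hc (hsθ.trans_lt hθ)
      (hMθ ▸ hM ⟨hs, hsθ.trans_lt hθ⟩ ⟨hcNθ, hθ⟩ hsθ),
    fun _ hs => bellman_eq_of_lt hc (hcθ.trans_lt hθ) (hcθ.trans_lt hs)
      fun hst => hMθ ▸ hM ⟨hcNθ, hθ⟩ ⟨hcNθ.trans hs.le, hst⟩ hs.le⟩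

/-- Below `t₀` the value is the maximum of `M` and a monotone function of `s`. -/
theorem countable_not_continuousAt_bellman {θ K : ℝ} (hM : ContinuousOn M (Iio t₀))
    (hφ : BddAbove (φ '' Iio t₀)) (hθ : θ < t₀) (htail : ∀ s, θ < s → bellman t₀ M φ s = K) :
    {s | ¬ContinuousAt (bellman t₀ M φ) s}.Countable := by
  set g := fun s => sSup (φ '' {a | a < s ∧ a < t₀})
  have hg : Monotone g := fun s s' hss' =>
    csSup_le_csSup (hφ.mono (image_mono fun a ha => ha.2))
      ((nonempty_setOf_lt_and_lt s t₀).image φ)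
      (image_mono fun a ha => ⟨ha.1.trans_le hss', ha.2⟩)
  refine hg.countable_not_continuousAt.mono fun s => mt fun (hgs : ContinuousAt g s) => ?_
  rcases lt_or_ge s t₀ with hst | hst
  · refine ContinuousAt.congr ((hM.continuousAt (Iio_mem_nhds hst)).max hgs) ?_
    filter_upwards [Iio_mem_nhds hst] with u hu
    rw [bellman, if_pos (mem_Iio.1 hu)]
  · refine ContinuousAt.congr (continuousAt_const (y := K)) ?_
    filter_upwards [Ioi_mem_nhds (hθ.trans_le hst)] with u hu
    exact (htail u hu).symm

theorem isRegularValue_bellman {cN θ b : ℝ} (hMc : ContinuousOn M (Iio t₀))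
    (hMφ : ∀ s < t₀, M s ≤ φ s + b) (hc : IsMaxOn φ (Iio t₀) c) (hcθ : c ≤ θ) (hθ : θ < t₀)
    (hcNθ : cN ≤ θ) (hMθ : M θ = φ c) (hM : AntitoneOn M (Ico cN t₀)) :
    IsRegularValue cN b (bellman t₀ M φ) := by
  obtain ⟨hlow, hhigh⟩ := bellman_threshold hc hcθ hθ hcNθ hMθ hM
  have hge : ∀ t, cN ≤ t → φ c ≤ bellman t₀ M φ t := fun t ht => by
    rcases le_or_gt t θ with h | h
    · rw [hlow t ht h, ← hMθ]
      exact hM ⟨ht, h.trans_lt hθ⟩ ⟨hcNθ, hθ⟩ h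
    · rw [hhigh t h]
  refine ⟨countable_not_continuousAt_bellman hMc ⟨φ c, forall_mem_image.2 hc⟩ hθ hhigh,
    fun r => ?_, fun x hx y hy hxy => ?_, fun s t ht => ?_⟩
  · obtain ⟨m, hm⟩ := isCompact_Icc.bddBelow_image
      (hMc.mono fun x (hx : x ∈ Icc r cN) => hx.2.trans_lt (hcNθ.trans_lt hθ))
    refine ⟨min m (φ c), forall_mem_image.2 fun s (hs : r ≤ s) => ?_⟩
    rcases le_or_gt cN s with h | h
    · exact (min_le_right _ _).trans (hge s h)
    · have hMs : M s ≤ bellman t₀ M φ s := by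
        rw [bellman, if_pos ((h.trans_le hcNθ).trans hθ)]
        exact le_max_left _ _
      exact (min_le_left _ _).trans ((hm (mem_image_of_mem M ⟨hs, h.le⟩)).trans hMs)
  · rcases le_or_gt y θ with h | h
    · rw [hlow x hx (hxy.trans h), hlow y hy h]
      exact hM ⟨hx, (hxy.trans h).trans_lt hθ⟩ ⟨hy, h.trans_lt hθ⟩ hxy
    · rw [hhigh y h]
      exact hge x hx
  · have hb : φ c ≤ φ c + b := by linarith [hMφ θ hθ, show φ θ ≤ φ c from hc hθ]
    have hMb : ∀ s < t₀, M s ≤ φ c + b := fun s hs => by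
      linarith [hMφ s hs, show φ s ≤ φ c from hc hs]
    linarith [bellman_le hc (hcθ.trans_lt hθ) hMb hb s, hge t ht]

end Bellman

/-- The expectation of `U (a + X)` for a jump `X` with density `f` on `(0, ∞)`. -/
noncomputable def expectedNext (f U : ℝ → ℝ) (a : ℝ) : ℝ :=
  ∫ x in Ioi (0:ℝ), f x * U (a + x)

section ExpectedNext

variable {f U : ℝ → ℝ}

theorem integrableOn_mul_comp_add_s12 (hf : IntegrableOn f (Ioi 0)) (hU : Measurable U) {r C : ℝ}
    (hC : ∀ t, r ≤ t → |U t| ≤ C) {s : ℝ} (hs : r ≤ s) :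
    IntegrableOn (fun x => f x * U (s + x)) (Ioi 0) :=
  hf.mul_bdd (hU.comp (measurable_const_add s)).aestronglyMeasurable
    ((ae_restrict_iff' measurableSet_Ioi).2
      (ae_of_all _ fun x (hx : 0 < x) => hC _ (by linarith)))

theorem continuous_expectedNext (hf : IntegrableOn f (Ioi 0))
    (hU : {s | ¬ContinuousAt U s}.Countable) (hbdd : ∀ r, ∃ C, ∀ t, r ≤ t → |U t| ≤ C) :
    Continuous (expectedNext f U) := by
  have hUm : Measurable U := measurable_of_countable_not_continuousAt hU
  refine continuous_iff_continuousAt.2 fun s₀ => ?_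
  obtain ⟨C, hC⟩ := hbdd (s₀ - 1)
  refine continuousAt_of_dominated (bound := fun x => ‖f x‖ * C)
    (Eventually.of_forall fun s =>
      hf.aestronglyMeasurable.mul (hUm.comp (measurable_const_add s)).aestronglyMeasurable)
    ?_ (hf.norm.mul_const C) ?_
  · filter_upwards [Ioi_mem_nhds (sub_one_lt s₀)] with s (hs : s₀ - 1 < s)
    filter_upwards [ae_restrict_mem measurableSet_Ioi] with x (hx : 0 < x)
    rw [norm_mul]
    exact mul_le_mul_of_nonneg_left (hC _ (by linarith)) (norm_nonneg _)
  · -- `U` is continuous at `s₀ + x` outside a countable, hence null, set of jumps `x`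
    refine ae_restrict_of_ae ?_
    filter_upwards [(hU.preimage (add_right_injective s₀)).ae_notMem volume] with x hx
    exact continuousAt_const.mul
      (ContinuousAt.comp (f := (· + x)) (not_not.1 hx) (continuous_add_const x).continuousAt)

theorem expectedNext_le_add (hf : IntegrableOn f (Ioi 0)) (hfnn : ∀ x, 0 ≤ f x)
    (hf1 : ∫ x in Ioi (0:ℝ), f x = 1) {s t b : ℝ}
    (hs : IntegrableOn (fun x => f x * U (s + x)) (Ioi 0))
    (ht : IntegrableOn (fun x => f x * U (t + x)) (Ioi 0))
    (hst : ∀ x, 0 < x → U (s + x) ≤ U (t + x) + b) :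
    expectedNext f U s ≤ expectedNext f U t + b :=
  calc expectedNext f U s ≤ ∫ x in Ioi (0:ℝ), (f x * U (t + x) + f x * b) :=
        setIntegral_mono_on hs (ht.add (hf.mul_const b)) measurableSet_Ioi fun x hx => by
          rw [← mul_add]
          exact mul_le_mul_of_nonneg_left (hst x hx) (hfnn x)
    _ = expectedNext f U t + b := by
        rw [integral_add ht (hf.mul_const b), integral_mul_const, hf1, one_mul]
        rfl

end ExpectedNext

namespace IsRegularValue

variable {cN b : ℝ} {V : ℝ → ℝ}

theorem exists_abs_le (hV : IsRegularValue cN b V) (r : ℝ) :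
    ∃ C, ∀ t, r ≤ t → |V t| ≤ C := by
  obtain ⟨m, hm⟩ := hV.bddBelow r
  refine ⟨max (V cN + b) (-m), fun t ht =>
    abs_le.2 ⟨?_, (hV.le_add t cN le_rfl).trans (le_max_left _ _)⟩⟩
  linarith [hm (mem_image_of_mem V (mem_Ici.2 ht)), le_max_right (V cN + b) (-m)]

theorem continuation {f : ℝ → ℝ} {γ : ℝ} (hV : IsRegularValue cN b V)
    (hf : IntegrableOn f (Ioi 0)) (hfnn : ∀ x, 0 ≤ f x) (hf1 : ∫ x in Ioi (0:ℝ), f x = 1)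
    (hγ : 0 ≤ γ) :
    Continuous (fun a => γ * expectedNext f V a) ∧
      AntitoneOn (fun a => γ * expectedNext f V a) (Ici cN) ∧
      ∀ a, γ * expectedNext f V a ≤ γ * expectedNext f V cN + γ * b := by
  have hint (s : ℝ) : IntegrableOn (fun x => f x * V (s + x)) (Ioi 0) := by
    obtain ⟨C, hC⟩ := hV.exists_abs_le s
    exact integrableOn_mul_comp_add_s12 hf
      (measurable_of_countable_not_continuousAt hV.countable_not_continuousAt) hC le_rfl
  refine ⟨continuous_const.mul (continuous_expectedNext hf hV.countable_not_continuousAt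
    hV.exists_abs_le), fun s (hs : cN ≤ s) t (ht : cN ≤ t) hst => ?_, fun a => ?_⟩
  · have hle := expectedNext_le_add hf hfnn hf1 (hint t) (hint s) (b := 0) fun x hx => by
      rw [add_zero]
      exact hV.antitoneOn (mem_Ici.2 (by linarith)) (mem_Ici.2 (by linarith)) (by linarith)
    rw [add_zero] at hle
    exact mul_le_mul_of_nonneg_left hle hγ
  · rw [← mul_add]
    exact mul_le_mul_of_nonneg_left (expectedNext_le_add hf hfnn hf1 (hint a) (hint cN)
      fun x hx => hV.le_add _ _ (by linarith)) hγ

end IsRegularValue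

section MergingStage

variable {G E : ℝ → ℝ} {cN t₀ ε : ℝ}

theorem exists_isMaxOn_nonmerge {θN' : ℝ} (hGcont : ContinuousOn G (Iio t₀))
    (hGinc : MonotoneOn G (Iic cN)) (hGdec : StrictAntiOn G (Ico cN t₀))
    (hGtop : Tendsto G (𝓝[<] t₀) atBot) (hGbot : Tendsto G atBot atBot) (hcNt₀ : cN < t₀)
    (hEcont : Continuous E) (hEanti : AntitoneOn E (Ici cN)) (hEosc : ∀ a, E a ≤ E cN + ε)
    (hε : ε < G 0) (hθN' : θN' < cN) (hGθN' : G θN' = G cN - G 0) :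
    ∃ c ∈ Ioc θN' cN, IsMaxOn (fun a => G a - G 0 + E a) (Iio t₀) c := by
  have hφG : ∀ a, G a - G 0 + E a ≤ G a + (E cN + ε - G 0) := fun a => by linarith [hEosc a]
  obtain ⟨c, hct₀, hc⟩ := ContinuousOn.exists_isMaxOn_Iio_of_tendsto_atBot
    ((hGcont.sub continuousOn_const).add hEcont.continuousOn)
    (tendsto_atBot_mono hφG (tendsto_atBot_add_const_right _ _ hGbot))
    (tendsto_atBot_mono hφG (tendsto_atBot_add_const_right _ _ hGtop))
  have hcNc : G cN - G 0 + E cN ≤ G c - G 0 + E c := hc (mem_Iio.2 hcNt₀)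
  refine ⟨c, ⟨?_, ?_⟩, hc⟩
  · by_contra! hcθ
    have := hGinc (hcθ.trans hθN'.le) hθN'.le hcθ
    linarith [hEosc c]
  · by_contra! hcNc'
    have := hGdec ⟨le_rfl, hcNt₀⟩ ⟨hcNc'.le, hct₀⟩ hcNc'
    linarith [hEanti (mem_Ici.2 le_rfl) (mem_Ici.2 hcNc'.le) hcNc'.le]

theorem exists_merge_eq_nonmerge {θN c : ℝ} (hGcont : ContinuousOn G (Iio t₀))
    (hGinc : MonotoneOn G (Iic cN)) (hEcont : Continuous E) (hEanti : AntitoneOn E (Ici cN))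
    (hEosc : ∀ a, E a ≤ E cN + ε) (hε : ε < G 0) (hθN : θN ∈ Ioo cN t₀)
    (hGθN : G θN = G cN - G 0) (hccN : c ≤ cN)
    (hcNc : G cN - G 0 + E cN ≤ G c - G 0 + E c) :
    ∃ θ ∈ Ioc cN θN, G θ + E θ = G c - G 0 + E c := by
  have hGc : G c ≤ G cN := hGinc hccN (mem_Iic.2 le_rfl) hccN
  have hlt : G c - G 0 + E c < G cN + E cN := by linarith [hEosc c]
  have hle : G θN + E θN ≤ G c - G 0 + E c := by
    linarith [hEanti (mem_Ici.2 le_rfl) (mem_Ici.2 hθN.1.le) hθN.1.le]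
  obtain ⟨θ, hθ, hθc⟩ := intermediate_value_Icc' hθN.1.le
    ((hGcont.mono fun x hx => hx.2.trans_lt hθN.2).add hEcont.continuousOn) ⟨hle, hlt.le⟩
  refine ⟨θ, ⟨hθ.1.lt_of_ne ?_, hθ.2⟩, hθc⟩
  rintro rfl
  exact hlt.ne hθc.symm

theorem bellman_merge_threshold {θN θN' : ℝ} (hGcont : ContinuousOn G (Iio t₀))
    (hGinc : MonotoneOn G (Iic cN)) (hGdec : StrictAntiOn G (Ico cN t₀))
    (hGtop : Tendsto G (𝓝[<] t₀) atBot) (hGbot : Tendsto G atBot atBot)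
    (hθN : θN ∈ Ioo cN t₀) (hGθN : G θN = G cN - G 0)
    (hθN' : θN' < cN) (hGθN' : G θN' = G cN - G 0)
    (hEcont : Continuous E) (hEanti : AntitoneOn E (Ici cN)) (hEosc : ∀ a, E a ≤ E cN + ε)
    (hε : ε < G 0) :
    (∃ θ ∈ Ioc cN θN, ∃ c ∈ Ioc θN' cN,
      (∀ s, cN ≤ s → s ≤ θ →
        bellman t₀ (fun s => G s + E s) (fun a => G a - G 0 + E a) s = G s + E s) ∧
      ∀ s, θ < s →
        bellman t₀ (fun s => G s + E s) (fun a => G a - G 0 + E a) s = G c - G 0 + E c) ∧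
    IsRegularValue cN (G 0) (bellman t₀ (fun s => G s + E s) (fun a => G a - G 0 + E a)) := by
  have hcNt₀ : cN < t₀ := hθN.1.trans hθN.2
  obtain ⟨c, hc, hcmax⟩ := exists_isMaxOn_nonmerge hGcont hGinc hGdec hGtop hGbot hcNt₀
    hEcont hEanti hEosc hε hθN' hGθN'
  obtain ⟨θ, hθ, hθc⟩ := exists_merge_eq_nonmerge hGcont hGinc hEcont hEanti hEosc hε hθN
    hGθN hc.2 (hcmax (mem_Iio.2 hcNt₀))
  have hθt₀ : θ < t₀ := hθ.2.trans_lt hθN.2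
  have hcθ : c ≤ θ := hc.2.trans hθ.1.le
  have hManti : AntitoneOn (fun s => G s + E s) (Ico cN t₀) := fun x hx y hy hxy =>
    add_le_add (hGdec.antitoneOn hx hy hxy) (hEanti (mem_Ici.2 hx.1) (mem_Ici.2 hy.1) hxy)
  exact ⟨⟨θ, hθ, c, hc, bellman_threshold hcmax hcθ hθt₀ hθ.1.le hθc hManti⟩,
    isRegularValue_bellman (hGcont.add hEcont.continuousOn) (fun s _ => by linarith)
      hcmax hcθ hθt₀ hθ.1.le hθc hManti⟩

end MergingStage

theorem stmt_12_general
    (cN t₀ : ℝ) (G : ℝ → ℝ)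
    (hGcont : ContinuousOn G (Iio t₀))
    (hGinc : StrictMonoOn G (Iic cN))
    (hGdec : StrictAntiOn G (Ico cN t₀))
    (hGtop : Tendsto G (nhdsWithin t₀ (Iio t₀)) atBot)
    (hGbot : Tendsto G atBot atBot)
    (hG0 : 0 < G 0)
    (θN : ℝ) (hθN : θN ∈ Ioo cN t₀) (hGθN : G θN = G cN - G 0)
    (θN' : ℝ) (hθN' : θN' < cN) (hGθN' : G θN' = G cN - G 0)
    (f : ℝ → ℝ) (γ : ℝ)
    (hfnn : ∀ x, 0 ≤ f x)
    (hf1 : (∫ x in Ioi (0:ℝ), f x) = 1) (hγ : γ ∈ Ioo (0:ℝ) 1)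
    (N : ℕ)
    (Vseq : ℕ → ℝ → ℝ)
    (hterm : ∀ s, Vseq N s = if s < t₀
      then max (G s) (sSup ((fun a => G a - G 0) '' {a | a < s ∧ a < t₀}))
      else sSup ((fun a => G a - G 0) '' Iio t₀))
    (hrec : ∀ k, 1 ≤ k → k < N → ∀ s, Vseq k s = if s < t₀
      then max (G s + γ * ∫ x in Ioi (0:ℝ), f x * Vseq (k + 1) (s + x))
        (sSup ((fun a => (G a - G 0) + γ * ∫ x in Ioi (0:ℝ), f x * Vseq (k + 1) (a + x)) ''
          {a | a < s ∧ a < t₀}))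
      else sSup ((fun a => (G a - G 0) + γ * ∫ x in Ioi (0:ℝ), f x * Vseq (k + 1) (a + x)) ''
        Iio t₀)) :
    ∀ k, 1 ≤ k → k ≤ N →
      ∃ θk ∈ Ioc cN θN, ∃ ck ∈ Ioc θN' cN,
        (∀ s, cN ≤ s → s ≤ θk →
          Vseq k s = if k = N then G s
            else G s + γ * ∫ x in Ioi (0:ℝ), f x * Vseq (k + 1) (s + x)) ∧
        (∀ s, θk < s →
          Vseq k s = if k = N then G ck - G 0
            else (G ck - G 0) + γ * ∫ x in Ioi (0:ℝ), f x * Vseq (k + 1) (ck + x)) := by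
  have hf : IntegrableOn f (Ioi 0) :=
    Integrable.of_integral_ne_zero (by rw [hf1]; exact one_ne_zero)
  have hstage (E : ℝ → ℝ)
      (hE : Continuous E ∧ AntitoneOn E (Ici cN) ∧ ∀ a, E a ≤ E cN + γ * G 0) :=
    bellman_merge_threshold hGcont hGinc.monotoneOn hGdec hGtop hGbot hθN hGθN hθN' hGθN'
      hE.1 hE.2.1 hE.2.2 (mul_lt_of_lt_one_left hG0 hγ.2)
  have hlast := hstage (fun _ => 0)
    ⟨continuous_const, antitoneOn_const, fun _ => by simp [mul_nonneg hγ.1.le hG0.le]⟩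
  have hVN : Vseq N = bellman t₀ (fun s => G s + 0) (fun a => G a - G 0 + 0) := by
    funext s
    simp only [hterm s, bellman, add_zero]
  have hVk (k : ℕ) (hk : 1 ≤ k) (hkN : k < N) : Vseq k = bellman t₀
      (fun s => G s + γ * expectedNext f (Vseq (k + 1)) s)
      (fun a => G a - G 0 + γ * expectedNext f (Vseq (k + 1)) a) :=
    funext (hrec k hk hkN)
  have hreg (k : ℕ) (hk : 1 ≤ k) (hkN : k ≤ N) : IsRegularValue cN (G 0) (Vseq k) := by
    induction hkN using Nat.decreasingInduction with
    | self => exact hVN ▸ hlast.2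
    | of_succ k hkN ih =>
      exact hVk k hk hkN ▸ (hstage _ ((ih (by omega)).continuation hf hfnn hf1 hγ.1.le)).2
  intro k hk hkN
  rcases hkN.lt_or_eq with hkN | rfl
  · obtain ⟨θ, hθ, c, hc, hlow, hhigh⟩ :=
      (hstage _ ((hreg (k + 1) (by omega) hkN).continuation hf hfnn hf1 hγ.1.le)).1
    simp only [if_neg hkN.ne, hVk k hk hkN]
    exact ⟨θ, hθ, c, hc, hlow, hhigh⟩
  · obtain ⟨θ, hθ, c, hc, hlow, hhigh⟩ := hlast.1
    simp only [if_pos, hVN, add_zero] at hlow hhigh ⊢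
    exact ⟨θ, hθ, c, hc, hlow, hhigh⟩

theorem stmt_12
    (cN t₀ : ℝ) (G : ℝ → ℝ)
    (hcN : cN < 0) (ht₀ : 0 < t₀)
    (hGcont : ContinuousOn G (Iio t₀))
    (hGinc : StrictMonoOn G (Iic cN))
    (hGdec : StrictAntiOn G (Ico cN t₀))
    (hGtop : Tendsto G (nhdsWithin t₀ (Iio t₀)) atBot)
    (hGbot : Tendsto G atBot atBot)
    (hG0 : 0 < G 0)
    (θN : ℝ) (hθN : θN ∈ Ioo cN t₀) (hGθN : G θN = G cN - G 0)
    (θN' : ℝ) (hθN' : θN' < cN) (hGθN' : G θN' = G cN - G 0)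
    (f : ℝ → ℝ) (γ : ℝ)
    (hfm : Measurable f) (hf0 : ∀ x ≤ 0, f x = 0) (hfnn : ∀ x, 0 ≤ f x)
    (hf1 : (∫ x in Ioi (0:ℝ), f x) = 1) (hγ : γ ∈ Ioo (0:ℝ) 1)
    (hfpos : ∀ᵐ x ∂volume, 0 < x → 0 < f x)
    (N : ℕ) (hN : 1 ≤ N)
    (Vseq : ℕ → ℝ → ℝ)
    (hterm : ∀ s, Vseq N s = if s < t₀
      then max (G s) (sSup ((fun a => G a - G 0) '' {a | a < s ∧ a < t₀}))
      else sSup ((fun a => G a - G 0) '' Iio t₀))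
    (hrec : ∀ k, 1 ≤ k → k < N → ∀ s, Vseq k s = if s < t₀
      then max (G s + γ * ∫ x in Ioi (0:ℝ), f x * Vseq (k + 1) (s + x))
        (sSup ((fun a => (G a - G 0) + γ * ∫ x in Ioi (0:ℝ), f x * Vseq (k + 1) (a + x)) ''
          {a | a < s ∧ a < t₀}))
      else sSup ((fun a => (G a - G 0) + γ * ∫ x in Ioi (0:ℝ), f x * Vseq (k + 1) (a + x)) ''
        Iio t₀)) :
    ∀ k, 1 ≤ k → k ≤ N →
      ∃ θk ∈ Ioc cN θN, ∃ ck ∈ Ioc θN' cN,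
        (∀ s, cN ≤ s → s ≤ θk →
          Vseq k s = if k = N then G s
            else G s + γ * ∫ x in Ioi (0:ℝ), f x * Vseq (k + 1) (s + x)) ∧
        (∀ s, θk < s →
          Vseq k s = if k = N then G ck - G 0
            else (G ck - G 0) + γ * ∫ x in Ioi (0:ℝ), f x * Vseq (k + 1) (ck + x)) :=
  stmt_12_general cN t₀ G hGcont hGinc hGdec hGtop hGbot hG0 θN hθN hGθN θN' hθN' hGθN' f γ hfnn hf1
    hγ N Vseq hterm hrec
end

section
/- If V is a Bellman fixed point, then for all s₁ < s₂ one has V(s₂) − V(s₁) ≥ −G(0). -/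
open MeasureTheory Set Filter

/-!
Write `Q a = H a + γ 𝔼 V(a + X)` for the value of the non-merging action `a`, so that merging at
`s` is worth `Q s + G 0`. Every action that is non-merging from `s₁` is also available from
`s₂ > s₁`, and so is the non-merging action `a = s₁` itself; hence `V s₁ ≤ V s₂ + G 0`. For the
suprema to behave (an unbounded `sSup` is `0` in Lean) one needs `Q` bounded above on `(-∞, t₀)`,
which follows from `G ≤ G c_N` there and `V` being bounded above.
-/

theorem integral_mul_le_of_integral_eq_one_s13 {α : Type*} [MeasurableSpace α] {μ : Measure α}
    {f g : α → ℝ} {M : ℝ} (hf : ∀ x, 0 ≤ f x) (hf1 : ∫ x, f x ∂μ = 1) (hg : ∀ x, g x ≤ M)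
    (hM : 0 ≤ M) : ∫ x, f x * g x ∂μ ≤ M := by
  have hfint : Integrable f μ := by
    by_contra h
    rw [integral_undef h] at hf1
    exact zero_ne_one hf1
  by_cases hfg : Integrable (fun x => f x * g x) μ
  · calc ∫ x, f x * g x ∂μ ≤ ∫ x, f x * M ∂μ :=
          integral_mono hfg (hfint.mul_const M) fun x => mul_le_mul_of_nonneg_left (hg x) (hf x)
      _ = M := by rw [integral_mul_const, hf1, one_mul]
  · rw [integral_undef hfg]
    exact hM

theorem MonotoneOn.apply_le_of_antitoneOn_Ico {G : ℝ → ℝ} {c t a : ℝ}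
    (hinc : MonotoneOn G (Iic c)) (hdec : AntitoneOn G (Ico c t)) (ha : a < t) : G a ≤ G c := by
  rcases le_or_gt a c with hac | hca
  · exact hinc hac self_mem_Iic hac
  · exact hdec ⟨le_rfl, hca.trans ha⟩ ⟨hca.le, ha⟩ hca.le

theorem le_add_of_eq_ite_max_sSup {W Q : ℝ → ℝ} {t c : ℝ} (hc : 0 ≤ c)
    (hQ : BddAbove (Q '' Iio t))
    (hW : ∀ s, W s = if s < t then max (Q s + c) (sSup (Q '' {a | a < s ∧ a < t}))
      else sSup (Q '' Iio t))
    {s₁ s₂ : ℝ} (hs : s₁ < s₂) : W s₁ ≤ W s₂ + c := by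
  have hbdd : BddAbove (Q '' {a | a < s₂ ∧ a < t}) := hQ.mono (image_mono fun a ha => ha.2)
  have hsup : sSup (Q '' {a | a < s₂ ∧ a < t}) ≤ W s₂ := by
    rw [hW s₂]
    split_ifs with h₂
    · exact le_max_right _ _
    · have hT : {a | a < s₂ ∧ a < t} = Iio t :=
        ext fun a => ⟨And.right, fun ha => ⟨ha.trans_le (not_lt.1 h₂), ha⟩⟩
      rw [hT]
  by_cases h₁ : s₁ < t
  · have hQs₁ : Q s₁ ≤ sSup (Q '' {a | a < s₂ ∧ a < t}) := le_csSup hbdd ⟨s₁, ⟨hs, h₁⟩, rfl⟩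
    have hne : {a | a < s₁ ∧ a < t}.Nonempty :=
      ⟨min s₁ t - 1, by constructor <;> linarith [min_le_left s₁ t, min_le_right s₁ t]⟩
    have hmono : sSup (Q '' {a | a < s₁ ∧ a < t}) ≤ sSup (Q '' {a | a < s₂ ∧ a < t}) :=
      csSup_le_csSup hbdd (hne.image Q) (image_mono fun a ha => ⟨ha.1.trans hs, ha.2⟩)
    rw [hW s₁, if_pos h₁]
    exact max_le (by linarith) (by linarith)
  · rw [hW s₁, if_neg h₁, hW s₂, if_neg fun h₂ => h₁ (hs.trans h₂)]
    linarith

theorem stmt_13_general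
    (cN t₀ : ℝ) (G : ℝ → ℝ)
    (hGinc : StrictMonoOn G (Iic cN))
    (hGdec : StrictAntiOn G (Ico cN t₀))
    (hG0 : 0 < G 0)
    (f : ℝ → ℝ) (γ : ℝ)
    (hfnn : ∀ x, 0 ≤ f x)
    (hf1 : (∫ x in Ioi (0:ℝ), f x) = 1) (hγ : γ ∈ Ioo (0:ℝ) 1)
    (V : ℝ → ℝ)
    (hVub : BddAbove (range V))
    (hfix : ∀ s, V s = if s < t₀
      then max (G s + γ * ∫ x in Ioi (0:ℝ), f x * V (s + x))
        (sSup ((fun a => (G a - G 0) + γ * ∫ x in Ioi (0:ℝ), f x * V (a + x)) ''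
          {a | a < s ∧ a < t₀}))
      else sSup ((fun a => (G a - G 0) + γ * ∫ x in Ioi (0:ℝ), f x * V (a + x)) '' Iio t₀)) :
    ∀ s₁ s₂ : ℝ, s₁ < s₂ → -G 0 ≤ V s₂ - V s₁ := by
  intro s₁ s₂ hs
  set Q : ℝ → ℝ := fun a => (G a - G 0) + γ * ∫ x in Ioi (0:ℝ), f x * V (a + x) with hQ
  obtain ⟨M, hM0, hM⟩ := hVub.exists_ge 0
  have hQle : ∀ a < t₀, Q a ≤ (G cN - G 0) + γ * M := fun a ha =>
    add_le_add
      (sub_le_sub_right (hGinc.monotoneOn.apply_le_of_antitoneOn_Ico hGdec.antitoneOn ha) _)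
      (mul_le_mul_of_nonneg_left (integral_mul_le_of_integral_eq_one_s13 hfnn hf1
        (fun x => hM _ (mem_range_self _)) hM0) hγ.1.le)
  have hbdd : BddAbove (Q '' Iio t₀) := ⟨_, forall_mem_image.2 hQle⟩
  have hmerge : ∀ s, G s + γ * ∫ x in Ioi (0:ℝ), f x * V (s + x) = Q s + G 0 := fun s => by
    rw [hQ]; ring
  have hbellman := le_add_of_eq_ite_max_sSup (W := V) hG0.le hbdd
    (fun s => by rw [hfix s, hmerge]) hs
  linarith

theorem stmt_13
    (cN t₀ : ℝ) (G : ℝ → ℝ)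
    (hcN : cN < 0) (ht₀ : 0 < t₀)
    (hGcont : ContinuousOn G (Iio t₀))
    (hGinc : StrictMonoOn G (Iic cN))
    (hGdec : StrictAntiOn G (Ico cN t₀))
    (hGtop : Tendsto G (nhdsWithin t₀ (Iio t₀)) atBot)
    (hGbot : Tendsto G atBot atBot)
    (hG0 : 0 < G 0)
    (f : ℝ → ℝ) (γ : ℝ)
    (hfm : Measurable f) (hf0 : ∀ x ≤ 0, f x = 0) (hfnn : ∀ x, 0 ≤ f x)
    (hf1 : (∫ x in Ioi (0:ℝ), f x) = 1) (hγ : γ ∈ Ioo (0:ℝ) 1)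
    (V : ℝ → ℝ) (hVm : Measurable V)
    (hVub : BddAbove (range V))
    (hVlb : ∀ r : ℝ, BddBelow (V '' Ici r))
    (hfix : ∀ s, V s = if s < t₀
      then max (G s + γ * ∫ x in Ioi (0:ℝ), f x * V (s + x))
        (sSup ((fun a => (G a - G 0) + γ * ∫ x in Ioi (0:ℝ), f x * V (a + x)) ''
          {a | a < s ∧ a < t₀}))
      else sSup ((fun a => (G a - G 0) + γ * ∫ x in Ioi (0:ℝ), f x * V (a + x)) '' Iio t₀)) :
    ∀ s₁ s₂ : ℝ, s₁ < s₂ → -G 0 ≤ V s₂ - V s₁ :=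
  stmt_13_general cN t₀ G hGinc hGdec hG0 f γ hfnn hf1 hγ V hVub hfix
end
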